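/- arXiv:2105.05892 — 6 statements merged into one kernel-verified Lean document; each statement's English description precedes it below -/
import Mathlib

section
/- For any non-crossing permutation π of {1,...,n}, the number of cycles of π plus the number of cycles of π⁻¹∘τ equals n+1, where τ is the cyclic permutation (1 2 ... n). -/
open Equiv

/-- The number of cycles of a permutation, counting fixed points as 1-cycles. -/
def cycleCount {n : ℕ} (π : Equiv.Perm (Fin n)) : ℕ :=
  π.cycleType.card + (Finset.univ.filter fun x => π x = x).card

/-- The cycle (orbit) partition of `π` is non-crossing: there are no
`a₁ < b₁ < a₂ < b₂` with `a₁, a₂` in one cycle and `b₁, b₂` in a different cycle. -/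
def HasNonCrossingCycles {n : ℕ} (π : Equiv.Perm (Fin n)) : Prop :=
  ¬ ∃ a₁ b₁ a₂ b₂ : Fin n, a₁ < b₁ ∧ b₁ < a₂ ∧ a₂ < b₂ ∧
      π.SameCycle a₁ a₂ ∧ π.SameCycle b₁ b₂ ∧ ¬ π.SameCycle a₁ b₁

/-- Each cycle of `π` traverses its elements (its block) in increasing cyclic order:
`π x` is the least element of the orbit of `x` strictly above `x` if one exists, and
the least element of the orbit otherwise. -/
def CyclicallyIncreasing {n : ℕ} (π : Equiv.Perm (Fin n)) : Prop :=
  ∀ x : Fin n,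
    ((∃ y, π.SameCycle x y ∧ x < y) →
        x < π x ∧ ∀ y, π.SameCycle x y → x < y → π x ≤ y) ∧
    ((∀ y, π.SameCycle x y → y ≤ x) → ∀ y, π.SameCycle x y → π x ≤ y)

/-- A non-crossing permutation: the permutation obtained from a non-crossing partition
by taking each block in increasing cyclic order. -/
def IsNonCrossingPerm {n : ℕ} (π : Equiv.Perm (Fin n)) : Prop :=
  HasNonCrossingCycles π ∧ CyclicallyIncreasing π

open Equiv.Perm

set_option linter.unusedVariables false

variable {n : ℕ}

lemma fixedCard_eq (f : Perm (Fin n)) :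
    (Finset.univ.filter fun x => f x = x).card = n - f.support.card := by
  have h := Finset.card_filter_add_card_filter_not (s := (Finset.univ : Finset (Fin n)))
    (p := fun x => f x = x)
  simp only [Finset.card_univ, Fintype.card_fin] at h
  have hs : f.support = Finset.univ.filter fun x => ¬ f x = x := by
    ext x; simp [Equiv.Perm.mem_support]
  rw [hs]; omega

lemma fix_support (f : Perm (Fin n)) :
    (Finset.univ.filter fun x => f x = x).card + f.support.card = n := by
  rw [fixedCard_eq]
  have := f.support.card_le_univ
  simp only [Finset.card_univ, Fintype.card_fin] at this
  omega

lemma cycleCount_disjoint_mul {f g : Perm (Fin n)} (h : Perm.Disjoint f g) :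
    cycleCount (f * g) + n = cycleCount f + cycleCount g := by
  unfold cycleCount
  rw [h.cycleType_mul, Multiset.card_add, fixedCard_eq, fixedCard_eq, fixedCard_eq,
    h.support_mul]
  have hd : _root_.Disjoint f.support g.support := h.disjoint_support
  rw [Finset.card_union_of_disjoint hd]
  have h1 := f.support.card_le_univ
  have h2 := g.support.card_le_univ
  have h3 := (f.support ∪ g.support).card_le_univ
  simp only [Finset.card_univ, Fintype.card_fin] at *
  rw [Finset.card_union_of_disjoint hd] at h3
  omega

lemma cycleCount_conj (f g : Perm (Fin n)) :
    cycleCount (g * f * g⁻¹) = cycleCount f := by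
  unfold cycleCount
  rw [Equiv.Perm.cycleType_conj]
  congr 1
  apply Finset.card_bij (fun x _ => g.symm x)
  · intro x hx
    simp only [Finset.mem_filter, Finset.mem_univ, true_and] at hx ⊢
    simp only [Perm.mul_apply] at hx
    have := congrArg g.symm hx
    simpa using this
  · intro x _ y _ hxy
    simpa using congrArg g hxy
  · intro y hy
    refine ⟨g y, ?_, by simp⟩
    simp only [Finset.mem_filter, Finset.mem_univ, true_and] at hy ⊢
    simp [Perm.mul_apply, hy]

lemma cycleCount_mul_comm (f g : Perm (Fin n)) :
    cycleCount (f * g) = cycleCount (g * f) := by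
  have := cycleCount_conj (g * f) f
  rw [← this]; congr 1; group

lemma cycleCount_one : cycleCount (1 : Perm (Fin n)) = n := by
  unfold cycleCount
  simp [Equiv.Perm.cycleType_one]

lemma cycleCount_isCycle {c : Perm (Fin n)} (hc : c.IsCycle) :
    cycleCount c + c.support.card = n + 1 := by
  unfold cycleCount
  rw [hc.cycleType, fixedCard_eq]
  have := c.support.card_le_univ
  simp only [Finset.card_univ, Fintype.card_fin] at this
  simp only [Multiset.coe_card, List.length_cons, List.length_nil, Multiset.card_singleton]
  omega

lemma cycleCount_swap_cycle {c : Perm (Fin n)} (hc : c.IsCycle) {a : Fin n} (ha : c a ≠ a) :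
    cycleCount (swap a (c a) * c) = cycleCount c + 1 := by
  by_cases h2 : c (c a) = a
  · have hcs : c = swap a (c a) := hc.eq_swap_of_apply_apply_eq_self ha h2
    have : swap a (c a) * c = 1 := by rw [hcs]; simp [swap_mul_self]
    rw [this, cycleCount_one]
    have h1 := cycleCount_isCycle hc
    have h2s : c.support.card = 2 := by
      rw [hcs]; exact Equiv.Perm.card_support_swap (Ne.symm ha)
    omega
  · have he : (swap a (c a) * c).IsCycle := hc.swap_mul ha h2
    have hs : (swap a (c a) * c).support = c.support.erase a := by
      rw [Equiv.Perm.support_swap_mul_eq c a h2, Finset.sdiff_singleton_eq_erase]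
    have h1 := cycleCount_isCycle hc
    have h2' := cycleCount_isCycle he
    rw [hs, Finset.card_erase_of_mem (Equiv.Perm.mem_support.2 ha)] at h2'
    have hpos : 0 < c.support.card := Finset.card_pos.2 ⟨a, Equiv.Perm.mem_support.2 ha⟩
    omega

lemma cycleCount_swap_mul_apply {f : Perm (Fin n)} {a : Fin n} (ha : f a ≠ a) :
    cycleCount (swap a (f a) * f) = cycleCount f + 1 := by
  set c := f.cycleOf a with hc
  have hmem : c ∈ f.cycleFactorsFinset :=
    Equiv.Perm.cycleOf_mem_cycleFactorsFinset_iff.2 (Equiv.Perm.mem_support.2 ha)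
  have hcc : c.IsCycle := Equiv.Perm.isCycle_cycleOf f ha
  have hca : c a = f a := Equiv.Perm.cycleOf_apply_self f a
  have hcfa : c (f a) = f (f a) := Equiv.Perm.cycleOf_apply_apply_self f a
  have hd : Perm.Disjoint (f * c⁻¹) c :=
    Equiv.Perm.disjoint_mul_inv_of_mem_cycleFactorsFinset hmem
  set d := f * c⁻¹ with hdd
  have hf : f = d * c := by rw [hdd]; group
  have hda : d a = a := (hd a).resolve_right (by rw [hca]; exact ha)
  have hdfa : d (f a) = f a :=
    (hd (f a)).resolve_right (by rw [hcfa]; exact fun h => ha (f.injective h))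
  have hdisj2 : Perm.Disjoint d (swap a (f a) * c) := by
    intro x
    rcases hd x with h | h
    · exact Or.inl h
    · right
      have hxa : x ≠ a := by rintro rfl; rw [hca] at h; exact ha h
      have hxfa : x ≠ f a := by
        rintro rfl; rw [hcfa] at h; exact ha (f.injective h)
      rw [Perm.mul_apply, h, swap_apply_of_ne_of_ne hxa hxfa]
  have hcomm : swap a (f a) * d = d * swap a (f a) := by
    have hds : Perm.Disjoint (swap a (f a)) d := by
      intro x
      by_cases h1 : x = a
      · subst h1; exact Or.inr hda
      · by_cases h2 : x = f a
        · subst h2; exact Or.inr hdfa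
        · exact Or.inl (swap_apply_of_ne_of_ne h1 h2)
    exact hds.commute.eq
  have hkey : d * (swap a (f a) * c) = swap a (f a) * f := by
    rw [← mul_assoc, ← hcomm, mul_assoc, ← hf]
  have e1 := cycleCount_disjoint_mul hd
  have e2 := cycleCount_disjoint_mul hdisj2
  have e3 := cycleCount_swap_cycle hcc (by rw [hca]; exact ha)
  rw [hca] at e3
  rw [← hkey]
  rw [← hf] at e1
  omega

lemma swap_shift {a b b' : Fin n} (hab : a ≠ b) (hab' : a ≠ b') (hbb' : b ≠ b') :
    swap a b' * swap b' b = swap a b * swap a b' := by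
  apply Equiv.ext
  intro x
  simp only [Perm.mul_apply, swap_apply_def]
  split_ifs <;> simp_all

lemma cycleCount_swap_mul_of_pow (k : ℕ) :
    ∀ (ρ : Perm (Fin n)) (a b : Fin n), (ρ ^ k) a = b → b ≠ a →
      cycleCount (swap a b * ρ) = cycleCount ρ + 1 := by
  induction k using Nat.strong_induction_on with
  | _ k IH =>
  intro ρ a b hk hba
  have hex : ∃ j, 0 < j ∧ (ρ ^ j) a = b := by
    refine ⟨k, ?_, hk⟩
    rcases Nat.eq_zero_or_pos k with h | h
    · subst h; simp at hk; exact absurd hk.symm hba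
    · exact h
  by_cases hmin : ∀ j, 0 < j → j < k → (ρ ^ j) a ≠ b
  · -- k is minimal (or at least no smaller exponent works)
    by_cases hb1 : ρ a = b
    · rw [← hb1]
      exact cycleCount_swap_mul_apply (hb1 ▸ hba : ρ a ≠ a)
    · -- k ≥ 2
      have hk0 : k ≠ 0 := by rintro rfl; simp at hk; exact hba hk.symm
      have hk1 : k ≠ 1 := by rintro rfl; simp at hk; exact hb1 hk
      have hk2 : 2 ≤ k := by omega
      set b' := ρ a with hb'
      have hb'a : b' ≠ a := by
        intro h
        have hfix : ρ a = a := by rw [← hb', h]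
        exact hba (by rw [← hk]; exact Equiv.Perm.pow_apply_eq_self_of_apply_eq_self hfix k)
      have hb'b : b' ≠ b := hb1
      have haneq : ρ a ≠ a := hb'a
      set ρ₁ := swap a b' * ρ with hρ₁
      have e1 : cycleCount ρ₁ = cycleCount ρ + 1 := cycleCount_swap_mul_apply haneq
      have hρ₁a : ρ₁ a = a := by
        rw [hρ₁, Perm.mul_apply, ← hb', swap_apply_right]
      -- no intermediate power returns to a
      have hnota : ∀ j, 0 < j → j ≤ k → (ρ ^ j) a ≠ a := by
        intro j hj0 hjk h
        rcases eq_or_lt_of_le hjk with h1 | h1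
        · subst h1; exact hba (by rw [← hk]; exact h)
        · have h2 : (ρ ^ (k - j)) ((ρ ^ j) a) = (ρ ^ k) a := by
            rw [← Perm.mul_apply, ← pow_add, (show k - j + j = k by omega)]
          rw [h, hk] at h2
          exact hmin (k - j) (by omega) (by omega) h2
      have hchain : ∀ j, j ≤ k - 1 → (ρ₁ ^ j) b' = (ρ ^ (j + 1)) a := by
        intro j
        induction j with
        | zero => intro _; simp [hb', pow_one]
        | succ m ihm =>
          intro hm
          have h1 : (ρ₁ ^ (m + 1)) b' = ρ₁ ((ρ ^ (m + 1)) a) := by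
            rw [pow_succ', Perm.mul_apply, ihm (by omega)]
          rw [h1, hρ₁, Perm.mul_apply]
          have h2 : ρ ((ρ ^ (m + 1)) a) = (ρ ^ (m + 2)) a := by
            rw [← Perm.mul_apply, ← pow_succ']
          rw [h2]
          have hne1 : (ρ ^ (m + 2)) a ≠ a := hnota (m + 2) (by omega) (by omega)
          have hne2 : (ρ ^ (m + 2)) a ≠ b' := by
            intro h
            have : (ρ ^ (m + 1)) a = a := by
              apply ρ.injective
              rw [← Perm.mul_apply, ← pow_succ', h, hb']
            exact hnota (m + 1) (by omega) (by omega) this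
          rw [swap_apply_of_ne_of_ne hne1 hne2]
      have hb2 : (ρ₁ ^ (k - 1)) b' = b := by
        rw [hchain (k - 1) le_rfl]
        have : k - 1 + 1 = k := by omega
        rw [this, hk]
      have e2 : cycleCount (swap b' b * ρ₁) = cycleCount ρ₁ + 1 :=
        IH (k - 1) (by omega) ρ₁ b' b hb2 (Ne.symm hb'b)
      set ρ₂ := swap b' b * ρ₁ with hρ₂
      have hρ₂a : ρ₂ a = a := by
        rw [hρ₂, Perm.mul_apply, hρ₁a, swap_apply_of_ne_of_ne (Ne.symm hb'a) (Ne.symm hba)]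
      set σ := swap a b' * ρ₂ with hσ
      have hσa : σ a = b' := by
        rw [hσ, Perm.mul_apply, hρ₂a, swap_apply_left]
      have e3 : cycleCount (swap a (σ a) * σ) = cycleCount σ + 1 :=
        cycleCount_swap_mul_apply (by rw [hσa]; exact hb'a)
      have e4 : swap a (σ a) * σ = ρ₂ := by
        rw [hσa, hσ, ← mul_assoc, swap_mul_self, one_mul]
      have e5 : σ = swap a b * ρ := by
        rw [hσ, hρ₂, ← mul_assoc, swap_shift (Ne.symm hba) (Ne.symm hb'a) (Ne.symm hb'b), hρ₁,
          mul_assoc, ← mul_assoc (swap a b'), swap_mul_self, one_mul]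
      rw [e4] at e3
      rw [← e5]
      omega
  · push_neg at hmin
    obtain ⟨j, hj0, hjk, hj⟩ := hmin
    exact IH j hjk ρ a b hj hba

lemma cycleCount_swap_mul_sameCycle {ρ : Perm (Fin n)} {a b : Fin n} (hab : a ≠ b)
    (h : ρ.SameCycle a b) : cycleCount (swap a b * ρ) = cycleCount ρ + 1 := by
  obtain ⟨i, _, hi⟩ := h.exists_pow_eq'
  exact cycleCount_swap_mul_of_pow i ρ a b hi (Ne.symm hab)

lemma sameCycle_swap_mul {σ : Perm (Fin n)} {a b : Fin n} (hab : a ≠ b)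
    (h : ¬ σ.SameCycle a b) : (swap a b * σ).SameCycle a b := by
  have hex : ∃ p, 0 < p ∧ (σ ^ p) a = a :=
    ⟨orderOf σ, orderOf_pos σ, by rw [pow_orderOf_eq_one]; rfl⟩
  classical
  set p := Nat.find hex with hp
  obtain ⟨hp0, hpa⟩ : 0 < p ∧ (σ ^ p) a = a := Nat.find_spec hex
  have hmin : ∀ j, 0 < j → j < p → (σ ^ j) a ≠ a := by
    intro j hj0 hjp hja
    exact Nat.find_min hex hjp ⟨hj0, hja⟩
  have hchain : ∀ j, j ≤ p - 1 → ((swap a b * σ) ^ j) a = (σ ^ j) a := by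
    intro j
    induction j with
    | zero => intro _; rfl
    | succ m ihm =>
      intro hm
      rw [pow_succ', Perm.mul_apply, ihm (by omega), Perm.mul_apply]
      have h1 : σ ((σ ^ m) a) = (σ ^ (m + 1)) a := by
        rw [← Perm.mul_apply, ← pow_succ']
      rw [h1]
      have hne1 : (σ ^ (m + 1)) a ≠ a := hmin (m + 1) (by omega) (by omega)
      have hne2 : (σ ^ (m + 1)) a ≠ b := by
        intro hb
        exact h ⟨((m : ℤ) + 1), by rw [← hb]; push_cast [zpow_natCast]; norm_cast⟩
      rw [swap_apply_of_ne_of_ne hne1 hne2]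
  have hfin : ((swap a b * σ) ^ p) a = b := by
    have hps : p = (p - 1) + 1 := by omega
    rw [hps, pow_succ', Perm.mul_apply, hchain (p - 1) le_rfl, Perm.mul_apply]
    have h1 : σ ((σ ^ (p - 1)) a) = (σ ^ p) a := by
      rw [← Perm.mul_apply, ← pow_succ', ← hps]
    rw [h1, hpa, swap_apply_left]
  exact ⟨(p : ℤ), by rw [zpow_natCast]; exact hfin⟩

section Transfer

variable {π : Perm (Fin n)} {a b : Fin n}

lemma transfer_fwd_aux (hb : π a = b) (hab : a ≠ b) :
    ∀ k : ℕ, ∀ x, x ≠ b → (π ^ k) x ≠ b → (π * swap a b).SameCycle x ((π ^ k) x) := by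
  intro k
  induction k using Nat.strong_induction_on with
  | _ k IH =>
  intro x hx hkx
  rcases k with _ | m
  · exact Equiv.Perm.SameCycle.refl _ _
  · have hsucc : (π ^ (m + 1)) x = π ((π ^ m) x) := by
      rw [pow_succ', Perm.mul_apply]
    by_cases hyb : (π ^ m) x = b
    · rcases m with _ | m'
      · exact absurd (by simpa using hyb) hx
      · have hy' : (π ^ (m' + 1)) x = π ((π ^ m') x) := by
          rw [pow_succ', Perm.mul_apply]
        have hy'a : (π ^ m') x = a := by
          apply π.injective
          rw [← hy', hyb, hb]
        have h1 : (π * swap a b).SameCycle x ((π ^ m') x) :=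
          IH m' (by omega) x hx (by rw [hy'a]; exact fun h => hab h)
        have h2 : (π * swap a b) a = π b := by
          rw [Perm.mul_apply, swap_apply_left]
        have h3 : (π ^ (m' + 1 + 1)) x = π b := by
          rw [hsucc, hyb]
        rw [hy'a] at h1
        have h4 : (π * swap a b).SameCycle a (π b) := by
          rw [← h2]
          exact Equiv.Perm.sameCycle_apply_right.2 (Equiv.Perm.SameCycle.refl _ _)
        have h5 := h1.trans h4
        rw [← h3] at h5
        exact h5
    · have h1 := IH m (by omega) x hx hyb
      have hya : (π ^ m) x ≠ a := by
        intro h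
        apply hkx
        rw [hsucc, h, hb]
      have h2 : (π * swap a b) ((π ^ m) x) = (π ^ (m + 1)) x := by
        rw [Perm.mul_apply, swap_apply_of_ne_of_ne hya hyb, hsucc]
      exact h1.trans (h2 ▸ Equiv.Perm.sameCycle_apply_right.2 (Equiv.Perm.SameCycle.refl _ _))

lemma transfer_bwd_aux (hb : π a = b) (hab : a ≠ b) :
    ∀ k : ℕ, ∀ x, x ≠ b →
      ((π * swap a b) ^ k) x ≠ b ∧ π.SameCycle x (((π * swap a b) ^ k) x) := by
  intro k
  induction k with
  | zero => exact fun x hx => ⟨hx, Equiv.Perm.SameCycle.refl _ _⟩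
  | succ m IH =>
    intro x hx
    obtain ⟨hwb, hsc⟩ := IH x hx
    set w := ((π * swap a b) ^ m) x with hw
    have hsucc : ((π * swap a b) ^ (m + 1)) x = (π * swap a b) w := by
      rw [pow_succ', Perm.mul_apply]
    by_cases hwa : w = a
    · have h1 : (π * swap a b) w = π b := by
        rw [hwa, Perm.mul_apply, swap_apply_left]
      have h2 : π b ≠ b := by
        intro h
        exact hab (π.injective (hb.trans h.symm))
      have h3 : π.SameCycle a (π b) := by
        have : π.SameCycle a (π (π a)) :=
          (Equiv.Perm.sameCycle_apply_right.2
            (Equiv.Perm.sameCycle_apply_right.2 (Equiv.Perm.SameCycle.refl _ _)))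
        rwa [hb] at this
      constructor
      · rw [hsucc, h1]; exact h2
      · rw [hsucc, h1]
        exact (hwa ▸ hsc).trans h3
    · have h1 : (π * swap a b) w = π w := by
        rw [Perm.mul_apply, swap_apply_of_ne_of_ne hwa hwb]
      have h2 : π w ≠ b := by
        intro h
        exact hwa (π.injective (h.trans hb.symm))
      constructor
      · rw [hsucc, h1]; exact h2
      · rw [hsucc, h1]
        exact hsc.trans (Equiv.Perm.sameCycle_apply_right.2 (Equiv.Perm.SameCycle.refl _ _))

lemma transfer_iff (hb : π a = b) (hab : a ≠ b) {x y : Fin n} (hx : x ≠ b) (hy : y ≠ b) :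
    π.SameCycle x y ↔ (π * swap a b).SameCycle x y := by
  constructor
  · intro h
    obtain ⟨i, _, hi⟩ := h.exists_pow_eq'
    exact hi ▸ transfer_fwd_aux hb hab i x hx (hi ▸ hy)
  · intro h
    obtain ⟨i, _, hi⟩ := h.exists_pow_eq'
    exact hi ▸ (transfer_bwd_aux hb hab i x hx).2

lemma pi'_fixed_b (hb : π a = b) : (π * swap a b) b = b := by
  rw [Perm.mul_apply, swap_apply_right, hb]

lemma sameCycle_b_eq (hb : π a = b) {y : Fin n} (h : (π * swap a b).SameCycle b y) : y = b :=
  (h.eq_of_left (pi'_fixed_b hb)).symm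

end Transfer

section NC

variable {π : Perm (Fin n)} {a b : Fin n}

lemma hasNonCrossing_pi' (hb : π a = b) (hab : a ≠ b) (h : HasNonCrossingCycles π) :
    HasNonCrossingCycles (π * swap a b) := by
  rintro ⟨a₁, b₁, a₂, b₂, h1, h2, h3, hsa, hsb, hns⟩
  have key : ∀ u v : Fin n, (π * swap a b).SameCycle u v → u ≠ v → u ≠ b ∧ v ≠ b := by
    intro u v hs huv
    constructor
    · rintro rfl; exact huv (sameCycle_b_eq hb hs).symm
    · rintro rfl; exact huv (sameCycle_b_eq hb hs.symm)
  obtain ⟨ha₁, ha₂⟩ := key _ _ hsa (ne_of_lt (h1.trans h2))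
  obtain ⟨hb₁, hb₂⟩ := key _ _ hsb (ne_of_lt (h2.trans h3))
  exact h ⟨a₁, b₁, a₂, b₂, h1, h2, h3, (transfer_iff hb hab ha₁ ha₂).2 hsa,
    (transfer_iff hb hab hb₁ hb₂).2 hsb, fun hc => hns ((transfer_iff hb hab ha₁ hb₁).1 hc)⟩

lemma cyclicallyIncreasing_pi' (hb : π a = b) (halt : a < b)
    (hcyc : CyclicallyIncreasing π) : CyclicallyIncreasing (π * swap a b) := by
  have hab : a ≠ b := ne_of_lt halt
  intro x
  by_cases hxb : x = b
  · rw [hxb]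
    constructor
    · rintro ⟨y, hsy, hlt⟩
      exact absurd (sameCycle_b_eq hb hsy) (ne_of_gt hlt)
    · intro _ y hsy
      rw [sameCycle_b_eq hb hsy, pi'_fixed_b hb]
  · by_cases hxa : x = a
    · rw [hxa]
      have hπ'a : (π * swap a b) a = π b := by rw [Perm.mul_apply, swap_apply_left]
      have hscab : π.SameCycle a b := ⟨1, by simpa using hb⟩
      constructor
      · rintro ⟨y, hsy, hlt⟩
        have hyb : y ≠ b := fun hh => hab (sameCycle_b_eq hb (hh ▸ hsy).symm)
        have hsy' : π.SameCycle a y := (transfer_iff hb hab hab hyb).mpr hsy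
        obtain ⟨c1a, c1b⟩ := (hcyc a).1 ⟨y, hsy', hlt⟩
        have hble : b ≤ y := by rw [← hb]; exact c1b y hsy' hlt
        have hblty : b < y := lt_of_le_of_ne hble (Ne.symm hyb)
        obtain ⟨c2a, c2b⟩ := (hcyc b).1 ⟨y, hscab.symm.trans hsy', hblty⟩
        constructor
        · rw [hπ'a]; exact halt.trans c2a
        · intro z hsz hltz
          have hzb : z ≠ b := fun hh => hab (sameCycle_b_eq hb (hh ▸ hsz).symm)
          have hsz' : π.SameCycle a z := (transfer_iff hb hab hab hzb).mpr hsz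
          have hblez : b ≤ z := by rw [← hb]; exact c1b z hsz' hltz
          have hbltz : b < z := lt_of_le_of_ne hblez (Ne.symm hzb)
          rw [hπ'a]
          exact c2b z (hscab.symm.trans hsz') hbltz
      · intro hall y hsy
        have hmax : ∀ w, π.SameCycle b w → w ≤ b := by
          intro w hsw
          by_cases hwb : w = b
          · exact hwb.le
          · have hsaw : π.SameCycle a w := hscab.trans hsw
            have h' : (π * swap a b).SameCycle a w := (transfer_iff hb hab hab hwb).mp hsaw
            exact (hall w h').trans halt.le
        have hc2 := (hcyc b).2 hmax
        have hyb : y ≠ b := fun hh => hab (sameCycle_b_eq hb (hh ▸ hsy).symm)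
        have hsy' : π.SameCycle a y := (transfer_iff hb hab hab hyb).mpr hsy
        rw [hπ'a]
        exact hc2 y (hscab.symm.trans hsy')
    · have hπ'x : (π * swap a b) x = π x := by
        rw [Perm.mul_apply, swap_apply_of_ne_of_ne hxa hxb]
      constructor
      · rintro ⟨y, hsy, hlt⟩
        have hyb : y ≠ b := fun hh => hxb (sameCycle_b_eq hb (hh ▸ hsy).symm)
        have hsy' : π.SameCycle x y := (transfer_iff hb hab hxb hyb).mpr hsy
        obtain ⟨c1a, c1b⟩ := (hcyc x).1 ⟨y, hsy', hlt⟩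
        refine ⟨by rw [hπ'x]; exact c1a, ?_⟩
        intro z hsz hltz
        have hzb : z ≠ b := fun hh => hxb (sameCycle_b_eq hb (hh ▸ hsz).symm)
        rw [hπ'x]
        exact c1b z ((transfer_iff hb hab hxb hzb).mpr hsz) hltz
      · intro hall y hsy
        have hyb : y ≠ b := fun hh => hxb (sameCycle_b_eq hb (hh ▸ hsy).symm)
        have hsy' := (transfer_iff hb hab hxb hyb).mpr hsy
        have hallπ : ∀ w, π.SameCycle x w → w ≤ x := by
          intro w hsw
          by_cases hwb : w = b
          · rw [hwb]
            rw [hwb] at hsw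
            by_contra hbx
            push_neg at hbx
            obtain ⟨d1, d2⟩ := (hcyc x).1 ⟨b, hsw, hbx⟩
            have hπxb : π x ≠ b := fun hh => hxa (π.injective (hh.trans hb.symm))
            have hsc' : (π * swap a b).SameCycle x (π x) :=
              (transfer_iff hb hab hxb hπxb).mp
                (Equiv.Perm.sameCycle_apply_right.2 (Equiv.Perm.SameCycle.refl _ _))
            exact absurd (hall _ hsc') (not_le.2 d1)
          · exact hall w ((transfer_iff hb hab hxb hwb).mp hsw)
        rw [hπ'x]
        exact (hcyc x).2 hallπ y hsy'

end NC

lemma exists_good_pair {m : ℕ} {π : Perm (Fin (m + 1))} (hπ : IsNonCrossingPerm π)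
    (hne : π ≠ 1) :
    ∃ a b : Fin (m + 1), π a = b ∧ a < b ∧
      ¬ (π⁻¹ * finRotate (m + 1)).SameCycle a b := by
  obtain ⟨hNC, hcyc⟩ := hπ
  -- the set of ascents is nonempty
  have hsupp : π.support.Nonempty := by
    rcases Finset.eq_empty_or_nonempty π.support with h | h
    · exact absurd (Equiv.Perm.support_eq_empty_iff.1 h) hne
    · exact h
  set mn := π.support.min' hsupp with hmn
  have hmem : mn ∈ π.support := π.support.min'_mem hsupp
  have hmnlt : mn < π mn := by
    have h1 : π mn ∈ π.support := Equiv.Perm.apply_mem_support.2 hmem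
    have h2 : mn ≤ π mn := π.support.min'_le _ h1
    exact lt_of_le_of_ne h2 (Ne.symm (Equiv.Perm.mem_support.1 hmem))
  set S := Finset.univ.filter (fun x : Fin (m + 1) => x < π x) with hS
  have hSne : S.Nonempty := ⟨mn, by simp [hS, hmnlt]⟩
  obtain ⟨a, haS, hamin⟩ := S.exists_min_image (fun x => (π x).val - x.val) hSne
  have halt : a < π a := by simpa [hS] using haS
  set b := π a with hbdef
  have hab : a ≠ b := ne_of_lt halt
  have hscab : π.SameCycle a b := ⟨1, by simp [hbdef]⟩
  refine ⟨a, b, rfl, halt, ?_⟩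
  -- interior elements are fixed
  have hfix : ∀ z : Fin (m + 1), a < z → z < b → π z = z := by
    intro z haz hzb
    by_contra hz
    -- a and z are in different cycles
    have hnot : ¬ π.SameCycle a z := by
      intro hs
      obtain ⟨_, c1b⟩ := (hcyc a).1 ⟨b, hscab, halt⟩
      exact absurd (c1b z hs haz) (not_le.2 hzb)
    -- the orbit of z is contained in the open interval (a, b)
    have hblock : ∀ w, π.SameCycle z w → a < w ∧ w < b := by
      intro w hsw
      constructor
      · by_contra haw
        push_neg at haw
        rcases eq_or_lt_of_le haw with heq | hlt
        · exact hnot (by rw [← heq]; exact hsw.symm)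
        · exact hNC ⟨w, a, z, b, hlt, haz, hzb, hsw.symm, hscab,
            fun hc => hnot (hc.symm.trans hsw.symm)⟩
      · by_contra hwb
        push_neg at hwb
        rcases eq_or_lt_of_le hwb with heq | hlt
        · refine hnot (hscab.trans ?_)
          have h1 : π.SameCycle z b := by rw [heq]; exact hsw
          exact h1.symm
        · exact hNC ⟨a, z, b, w, haz, hzb, hlt, hscab, hsw, fun hc => hnot hc⟩
    -- take the minimum of the orbit of z
    set O := Finset.univ.filter (fun w : Fin (m + 1) => π.SameCycle z w) with hO
    have hOne : O.Nonempty := ⟨z, Finset.mem_filter.2 ⟨Finset.mem_univ z, Equiv.Perm.SameCycle.refl _ _⟩⟩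
    set u := O.min' hOne with hu
    have huO : u ∈ O := O.min'_mem hOne
    have hszu : π.SameCycle z u := by simpa [hO] using huO
    have hπuO : π u ∈ O := by
      simp only [hO, Finset.mem_filter, Finset.mem_univ, true_and]
      exact hszu.trans (Equiv.Perm.sameCycle_apply_right.2 (Equiv.Perm.SameCycle.refl _ _))
    have hult : u < π u := by
      have h1 : u ≤ π u := O.min'_le _ hπuO
      rcases eq_or_lt_of_le h1 with heq | hlt
      · exfalso
        have hz2 : z = u := hszu.eq_of_right heq.symm
        apply hz
        rw [hz2]
        exact heq.symm
      · exact hlt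
    obtain ⟨hau, _⟩ := hblock u hszu
    obtain ⟨_, hπub⟩ := hblock (π u) (by simpa [hO] using hπuO)
    have huS : u ∈ S := by simp [hS, hult]
    have := hamin u huS
    rw [Fin.lt_def] at hau hult hπub halt
    omega
  -- the interval [a, b) is invariant under σ
  intro hsame
  have hinv : ∀ y : Fin (m + 1), a ≤ y → y < b →
      a ≤ (π⁻¹ * finRotate (m + 1)) y ∧ (π⁻¹ * finRotate (m + 1)) y < b := by
    intro y hay hyb
    have hylt : y.val < m := by
      have h1 : y.val < b.val := hyb
      have h2 : b.val ≤ m := Nat.lt_succ_iff.1 b.isLt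
      omega
    have hy1 : (finRotate (m + 1) y).val = y.val + 1 := by
      rw [finRotate_succ_apply]
      exact Fin.val_add_one_of_lt (by rw [Fin.lt_def, Fin.val_last]; exact hylt)
    set y1 := finRotate (m + 1) y with hy1def
    have hy1le : y1.val ≤ b.val := by
      rw [hy1]
      exact hyb
    rcases eq_or_lt_of_le hy1le with heq | hlt
    · have hy1b : y1 = b := Fin.ext heq
      have : (π⁻¹ * finRotate (m + 1)) y = a := by
        rw [Perm.mul_apply, ← hy1def, hy1b, hbdef, Perm.inv_def, Equiv.symm_apply_apply]
      rw [this]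
      exact ⟨le_refl a, halt⟩
    · have hay1 : a < y1 := by
        rw [Fin.lt_def, hy1]
        have := Fin.le_def.1 hay
        omega
      have hy1b : y1 < b := by rw [Fin.lt_def]; exact hlt
      have hfixy : π y1 = y1 := hfix y1 hay1 hy1b
      have hinvy : π⁻¹ y1 = y1 := by
        nth_rewrite 1 [← hfixy]
        exact π.symm_apply_apply y1
      have : (π⁻¹ * finRotate (m + 1)) y = y1 := by
        rw [Perm.mul_apply, ← hy1def, hinvy]
      rw [this]
      exact ⟨hay1.le, hy1b⟩
  have hpow : ∀ j : ℕ, a ≤ ((π⁻¹ * finRotate (m + 1)) ^ j) a ∧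
      ((π⁻¹ * finRotate (m + 1)) ^ j) a < b := by
    intro j
    induction j with
    | zero => exact ⟨le_refl a, halt⟩
    | succ k ihk =>
      have hstep : ((π⁻¹ * finRotate (m + 1)) ^ (k + 1)) a =
          (π⁻¹ * finRotate (m + 1)) (((π⁻¹ * finRotate (m + 1)) ^ k) a) := by
        rw [pow_succ', Perm.mul_apply]
      rw [hstep]
      exact hinv _ ihk.1 ihk.2
  obtain ⟨i, _, hi⟩ := hsame.exists_pow_eq'
  have := (hpow i).2
  rw [hi] at this
  exact absurd this (lt_irrefl b)

lemma cycleCount_finRotate_pos {m : ℕ} : cycleCount (finRotate (m + 1)) = 1 := by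
  rcases m with _ | m'
  · unfold cycleCount
    simp [finRotate_one]
    rfl
  · unfold cycleCount
    rw [cycleType_finRotate, fixedCard_eq, support_finRotate]
    simp

lemma main_aux {m : ℕ} : ∀ (N : ℕ) (π : Perm (Fin (m + 1))), π.support.card ≤ N →
    IsNonCrossingPerm π →
    cycleCount π + cycleCount (π⁻¹ * finRotate (m + 1)) = (m + 1) + 1 := by
  intro N
  induction N with
  | zero =>
    intro π hcard _
    have hπ1 : π = 1 := by
      rw [← Equiv.Perm.support_eq_empty_iff]
      exact Finset.card_eq_zero.1 (Nat.le_zero.1 hcard)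
    subst hπ1
    rw [inv_one, one_mul, cycleCount_one, cycleCount_finRotate_pos]
  | succ N IH =>
    intro π hcard hπ
    by_cases hπ1 : π = 1
    · subst hπ1
      rw [inv_one, one_mul, cycleCount_one, cycleCount_finRotate_pos]
    · obtain ⟨a, b, hb, halt, hF3⟩ := exists_good_pair hπ hπ1
      have hab : a ≠ b := ne_of_lt halt
      set σ := π⁻¹ * finRotate (m + 1) with hσ
      set π' := π * swap a b with hπ'
      have hσ' : π'⁻¹ * finRotate (m + 1) = swap a b * σ := by
        rw [hπ', mul_inv_rev, swap_inv, hσ, mul_assoc]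
      have hscab : π.SameCycle a b := ⟨1, by simp [hb]⟩
      have e1 : cycleCount π' = cycleCount π + 1 := by
        rw [hπ', cycleCount_mul_comm]
        exact cycleCount_swap_mul_sameCycle hab hscab
      have hsc' : (swap a b * σ).SameCycle a b := sameCycle_swap_mul hab hF3
      have e2 : cycleCount (swap a b * (swap a b * σ)) = cycleCount (swap a b * σ) + 1 :=
        cycleCount_swap_mul_sameCycle hab hsc'
      have hdouble : swap a b * (swap a b * σ) = σ := by
        rw [← mul_assoc, swap_mul_self, one_mul]
      rw [hdouble] at e2
      -- support decreases
      have hbsupp : b ∈ π.support := by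
        rw [Equiv.Perm.mem_support]
        intro h
        exact hab (π.injective (hb.trans h.symm))
      have hsub : π'.support ⊆ π.support := by
        intro x hx
        rw [Equiv.Perm.mem_support] at hx ⊢
        intro hfx
        apply hx
        rw [hπ', Perm.mul_apply]
        by_cases h1 : x = a
        · exfalso
          rw [h1] at hfx
          exact hab (hfx.symm.trans hb)
        · by_cases h2 : x = b
          · rw [h2, swap_apply_right, hb, ← h2]
          · rw [swap_apply_of_ne_of_ne h1 h2, hfx]
      have hbnot : b ∉ π'.support := by
        rw [Equiv.Perm.mem_support]
        push_neg
        rw [hπ']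
        exact pi'_fixed_b hb
      have hlt : π'.support.card < π.support.card :=
        Finset.card_lt_card ⟨hsub, fun hall => hbnot (hall hbsupp)⟩
      have hcard' : π'.support.card ≤ N := by omega
      have hπ'nc : IsNonCrossingPerm π' :=
        ⟨hasNonCrossing_pi' hb hab hπ.1, cyclicallyIncreasing_pi' hb halt hπ.2⟩
      have hIH := IH π' hcard' hπ'nc
      rw [hσ'] at hIH
      omega


/-- **Biane's lemma.** For any non-crossing permutation `π` of `{1,…,n}` (`n ≥ 1`),
the number of cycles of `π` plus the number of cycles of `π⁻¹ ∘ τ` equals `n + 1`,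
where `τ = (1 2 … n)` is the full cyclic permutation. -/
theorem noncrossing_cycleCount_add_cycleCount_inv_mul_rotate {n : ℕ} (hn : 1 ≤ n)
    (π : Equiv.Perm (Fin n)) (hπ : IsNonCrossingPerm π) :
    cycleCount π + cycleCount (π⁻¹ * finRotate n) = n + 1 := by
  obtain ⟨m, rfl⟩ : ∃ m, n = m + 1 := ⟨n - 1, by omega⟩
  exact main_aux π.support.card π le_rfl hπ
end

section
/- For any two permutations π₁, π₂ of {1,...,n}, the sum of their numbers of cycles satisfies |π₁| + |π₂| ≤ |π₁∘π₂| + n. -/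
open Equiv Equiv.Perm Finset Module

variable {n : ℕ}

/-- The subspace of vectors constant on the orbits of `σ`. -/
def fixSub (σ : Equiv.Perm (Fin n)) : Submodule ℚ (Fin n → ℚ) where
  carrier := {v | ∀ x, v (σ x) = v x}
  add_mem' := by intro a b ha hb x; simp [ha x, hb x]
  zero_mem' := by intro x; rfl
  smul_mem' := by intro c v hv x; simp [hv x]

lemma mem_fixSub {σ : Equiv.Perm (Fin n)} {v : Fin n → ℚ} :
    v ∈ fixSub σ ↔ ∀ x, v (σ x) = v x := Iff.rfl

lemma fix_pow {σ : Equiv.Perm (Fin n)} {v : Fin n → ℚ} (hv : v ∈ fixSub σ) (m : ℕ) (x : Fin n) :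
    v ((σ ^ m) x) = v x := by
  induction m generalizing x with
  | zero => simp
  | succ m ih =>
    rw [pow_succ', Equiv.Perm.mul_apply]
    exact (hv ((σ ^ m) x)).trans (ih x)

lemma fix_zpow {σ : Equiv.Perm (Fin n)} {v : Fin n → ℚ} (hv : v ∈ fixSub σ) (i : ℤ) (x : Fin n) :
    v ((σ ^ i) x) = v x := by
  cases i with
  | ofNat m => simpa using fix_pow hv m x
  | negSucc m =>
    rw [zpow_negSucc]
    have := fix_pow hv (m + 1) (((σ ^ (m + 1))⁻¹ : Equiv.Perm (Fin n)) x)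
    rw [← Equiv.Perm.mul_apply, mul_inv_cancel, Equiv.Perm.one_apply] at this
    exact this.symm

/-- Key dimension formula: `dim fixSub σ + |support σ| = n + (number of nontrivial cycles)`. -/
lemma finrank_fixSub (σ : Equiv.Perm (Fin n)) :
    finrank ℚ (fixSub σ) + σ.support.card = n + Multiset.card σ.cycleType := by
  induction σ using Equiv.Perm.cycle_induction_on with
  | base_one =>
    have : fixSub (1 : Equiv.Perm (Fin n)) = ⊤ := by
      ext v; simp [mem_fixSub]
    rw [this]
    simp [finrank_top, Module.finrank_pi]
  | base_cycles c hc =>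
    obtain ⟨a, ha, hrel⟩ := hc
    have haMem : a ∈ c.support := mem_support.2 ha
    -- v is constant on the support of c
    have hconst : ∀ v ∈ fixSub c, ∀ x ∈ c.support, v x = v a := by
      intro v hv x hx
      obtain ⟨i, hi⟩ := hrel (mem_support.1 hx)
      rw [← hi, fix_zpow hv]
    -- the explicit inverse map
    set G : ((↥(c.supportᶜ) → ℚ) × ℚ) → (Fin n → ℚ) := fun p x =>
      if hx : x ∈ c.support then p.2 else p.1 ⟨x, Finset.mem_compl.mpr hx⟩ with hG
    have hGmem : ∀ p, G p ∈ fixSub c := by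
      intro p x
      by_cases hx : x ∈ c.support
      · have hx' : c x ∈ c.support := apply_mem_support.mpr hx
        show (if _ : c x ∈ c.support then p.2 else _) = (if _ : x ∈ c.support then p.2 else _)
        rw [dif_pos hx', dif_pos hx]
      · rw [notMem_support.mp hx]
    have e : (fixSub c) ≃ₗ[ℚ] ((↥(c.supportᶜ) → ℚ) × ℚ) :=
      { toFun := fun v => (fun x => v.1 x.1, v.1 a)
        map_add' := by intro u w; rfl
        map_smul' := by intro r u; rfl
        invFun := fun p => ⟨G p, hGmem p⟩
        left_inv := by
          intro v
          apply Subtype.ext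
          funext x
          show (if _ : x ∈ c.support then (v : Fin n → ℚ) a else (v : Fin n → ℚ) x)
              = (v : Fin n → ℚ) x
          by_cases hx : x ∈ c.support
          · rw [dif_pos hx]
            exact (hconst v.1 v.2 x hx).symm
          · rw [dif_neg hx]
        right_inv := by
          intro p
          apply Prod.ext
          · funext x
            have hx : (x : Fin n) ∉ c.support := Finset.mem_compl.mp x.2
            show (if _ : (x : Fin n) ∈ c.support then p.2 else _) = p.1 x
            rw [dif_neg hx]
          · show (if _ : a ∈ c.support then p.2 else _) = p.2
            rw [dif_pos haMem] }
    have hdim : finrank ℚ (fixSub c) = (n - c.support.card) + 1 := by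
      rw [e.finrank_eq]
      rw [Module.finrank_prod, Module.finrank_pi, Module.finrank_self]
      congr 1
      rw [Fintype.card_coe, Finset.card_compl, Fintype.card_fin]
    have hct : Multiset.card (Equiv.Perm.cycleType c) = 1 :=
      Equiv.Perm.card_cycleType_eq_one.mpr ⟨a, ha, hrel⟩
    have hle : c.support.card ≤ n := by
      simpa using Finset.card_le_univ c.support
    rw [hdim, hct]
    omega
  | induction_disjoint σ τ hdisj hc ihσ ihτ =>
    -- Fix(στ) = Fix σ ⊓ Fix τ
    have hinf : fixSub (σ * τ) = fixSub σ ⊓ fixSub τ := by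
      apply le_antisymm
      · intro v hv
        constructor
        · intro x
          rcases hdisj x with h | h
          · rw [h]
          · have := hv x
            rwa [Equiv.Perm.mul_apply, h] at this
        · intro x
          by_cases h : τ x = x
          · rw [h]
          · have hτx : τ x ∈ τ.support := by
              rw [mem_support]
              exact fun hh => h (τ.injective hh)
            have hσ : σ (τ x) = τ x := by
              rcases hdisj (τ x) with h' | h'
              · exact h'
              · exact absurd h' (mem_support.1 hτx)
            have := hv x
            rwa [Equiv.Perm.mul_apply, hσ] at this
      · rintro v ⟨h1, h2⟩ x
        rw [Equiv.Perm.mul_apply, h1 (τ x), h2 x]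
    -- Fix σ ⊔ Fix τ = ⊤
    have hsup : fixSub σ ⊔ fixSub τ = ⊤ := by
      rw [Submodule.eq_top_iff']
      intro v
      set v₁ : Fin n → ℚ := fun x => if σ x = x then v x else 0 with hv₁
      set v₂ : Fin n → ℚ := fun x => if σ x = x then 0 else v x with hv₂
      have h₁ : v₁ ∈ fixSub σ := by
        intro x
        by_cases h : σ x = x
        · rw [h]
        · have h' : σ (σ x) ≠ σ x := fun hh => h (σ.injective hh)
          simp [hv₁, h, h']
      have h₂ : v₂ ∈ fixSub τ := by
        intro x
        by_cases h : τ x = x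
        · rw [h]
        · have hx : σ x = x := by
            rcases hdisj x with h' | h'
            · exact h'
            · exact absurd h' h
          have hτx : τ x ∈ τ.support := by
            rw [mem_support]
            exact fun hh => h (τ.injective hh)
          have hστx : σ (τ x) = τ x := by
            rcases hdisj (τ x) with h' | h'
            · exact h'
            · exact absurd h' (mem_support.1 hτx)
          simp [hv₂, hx, hστx]
      have hv : v = v₁ + v₂ := by
        funext x
        by_cases h : σ x = x <;> simp [hv₁, hv₂, h]
      rw [hv]
      exact Submodule.add_mem _ (Submodule.mem_sup_left h₁) (Submodule.mem_sup_right h₂)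
    have grass := Submodule.finrank_sup_add_finrank_inf_eq (fixSub σ) (fixSub τ)
    rw [hsup, ← hinf] at grass
    have htop : finrank ℚ (⊤ : Submodule ℚ (Fin n → ℚ)) = n := by
      rw [finrank_top, Module.finrank_pi, Fintype.card_fin]
    rw [htop] at grass
    rw [hdisj.card_support_mul, hdisj.cycleType_mul, Multiset.card_add]
    omega

lemma card_filter_fixed (σ : Equiv.Perm (Fin n)) :
    (Finset.univ.filter fun x => σ x = x).card = n - σ.support.card := by
  have : (Finset.univ.filter fun x => σ x = x) = σ.supportᶜ := by
    ext x
    simp [mem_support]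
  rw [this, Finset.card_compl, Fintype.card_fin]

lemma cycleCount_eq_finrank (σ : Equiv.Perm (Fin n)) :
    cycleCount σ = finrank ℚ (fixSub σ) := by
  have h := finrank_fixSub σ
  have hle : σ.support.card ≤ n := by simpa using Finset.card_le_univ σ.support
  unfold cycleCount
  rw [card_filter_fixed]
  omega

/-- For any two permutations `π₁, π₂` of `{1,…,n}`,
`|π₁| + |π₂| ≤ |π₁ ∘ π₂| + n`, where `|·|` counts cycles (fixed points included). -/
theorem cycleCount_add_cycleCount_le {n : ℕ} (π₁ π₂ : Equiv.Perm (Fin n)) :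
    cycleCount π₁ + cycleCount π₂ ≤ cycleCount (π₁ * π₂) + n := by
  have hmono : fixSub π₁ ⊓ fixSub π₂ ≤ fixSub (π₁ * π₂) := by
    rintro v ⟨h1, h2⟩ x
    rw [Equiv.Perm.mul_apply, h1 (π₂ x), h2 x]
  have grass := Submodule.finrank_sup_add_finrank_inf_eq (fixSub π₁) (fixSub π₂)
  have hsup : finrank ℚ ↥(fixSub π₁ ⊔ fixSub π₂) ≤ n := by
    have := Submodule.finrank_le (fixSub π₁ ⊔ fixSub π₂)
    rwa [Module.finrank_pi, Fintype.card_fin] at this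
  have hinf : finrank ℚ ↥(fixSub π₁ ⊓ fixSub π₂) ≤ finrank ℚ (fixSub (π₁ * π₂)) :=
    Submodule.finrank_mono hmono
  rw [cycleCount_eq_finrank, cycleCount_eq_finrank, cycleCount_eq_finrank]
  omega
end

section
/- Let ρ be a density operator on a finite-dimensional Hilbert space, and let n ≥ 2 and k ≥ 2 be integers. If {nᵢ} is a list of n+1-k positive integers summing to n, then Tr(ρ^k) ≥ ∏ᵢ₌₁^{n+1-k} Tr(ρ^{nᵢ}). -/
open Matrix ComplexOrder

lemma conj_pow_aux {d : ℕ} (U D : Matrix (Fin d) (Fin d) ℂ) (hU : star U * U = 1)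
    (hU' : U * star U = 1) (m : ℕ) : (U * D * star U) ^ m = U * D ^ m * star U := by
  induction m with
  | zero => simp [hU']
  | succ m ih =>
    rw [pow_succ, ih, pow_succ]
    simp only [Matrix.mul_assoc]
    rw [← Matrix.mul_assoc (star U) U, hU, Matrix.one_mul]

lemma trace_pow_eq {d : ℕ} (ρ : Matrix (Fin d) (Fin d) ℂ) (hρ : ρ.PosSemidef) (m : ℕ) :
    ((ρ ^ m).trace) = ∑ i, ((hρ.1.eigenvalues i : ℂ)) ^ m := by
  have h := hρ.1.spectral_theorem
  rw [Unitary.conjStarAlgAut_apply] at h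
  set U := (hρ.1.eigenvectorUnitary : Matrix (Fin d) (Fin d) ℂ)
  have hU : star U * U = 1 := (Matrix.mem_unitaryGroup_iff').mp hρ.1.eigenvectorUnitary.2
  have hU' : U * star U = 1 := (Matrix.mem_unitaryGroup_iff).mp hρ.1.eigenvectorUnitary.2
  conv_lhs => rw [h]
  rw [conj_pow_aux U _ hU hU' m, Matrix.trace_mul_cycle, hU,
    Matrix.one_mul, Matrix.diagonal_pow, Matrix.trace_diagonal]
  simp

lemma key_pow_ineq (x y : ℝ) (hx : 0 ≤ x) (hy : 0 ≤ y) (a b : ℕ) :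
    x^a*y^b + y^a*x^b ≤ x^(a+b) + y^(a+b) := by
  rw [pow_add, pow_add]
  rcases le_total x y with hxy | hxy
  · nlinarith [pow_le_pow_left₀ hx hxy a, pow_le_pow_left₀ hx hxy b,
      pow_nonneg hx a, pow_nonneg hx b, pow_nonneg hy a, pow_nonneg hy b]
  · nlinarith [pow_le_pow_left₀ hy hxy a, pow_le_pow_left₀ hy hxy b,
      pow_nonneg hx a, pow_nonneg hx b, pow_nonneg hy a, pow_nonneg hy b]

lemma symm2 {d : ℕ} (f : Fin d → Fin d → ℝ) :
    2 * ∑ i, ∑ j, f i j = ∑ i, ∑ j, (f i j + f j i) := by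
  have h : ∑ i, ∑ j, f j i = ∑ i, ∑ j, f i j := Finset.sum_comm
  simp [Finset.sum_add_distrib, two_mul, h]

lemma cheb {d : ℕ} (x : Fin d → ℝ) (hx : ∀ i, 0 ≤ x i) (hsum : ∑ i, x i = 1)
    (a b : ℕ) (ha : 1 ≤ a) (hb : 1 ≤ b) :
    (∑ i, x i ^ a) * (∑ i, x i ^ b) ≤ ∑ i, x i ^ (a + b - 1) := by
  obtain ⟨a, rfl⟩ : ∃ a', a = a' + 1 := ⟨a - 1, by omega⟩
  obtain ⟨b, rfl⟩ : ∃ b', b = b' + 1 := ⟨b - 1, by omega⟩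
  have hab : a + 1 + (b + 1) - 1 = a + b + 1 := by omega
  rw [hab]
  have hR : ∑ i, x i ^ (a + b + 1) = (∑ i, x i ^ (a + b + 1)) * (∑ i, x i) := by
    rw [hsum, mul_one]
  rw [hR, Finset.sum_mul_sum, Finset.sum_mul_sum]
  rw [← mul_le_mul_iff_right₀ (show (0:ℝ) < 2 by norm_num)]
  rw [symm2 (fun i j => x i ^ (a+1) * x j ^ (b+1)), symm2 (fun i j => x i ^ (a+b+1) * x j)]
  refine Finset.sum_le_sum fun i _ => Finset.sum_le_sum fun j _ => ?_
  have hkey := key_pow_ineq (x i) (x j) (hx i) (hx j) a b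
  have h2 := mul_le_mul_of_nonneg_left hkey (mul_nonneg (hx i) (hx j))
  calc x i ^ (a+1) * x j ^ (b+1) + x j ^ (a+1) * x i ^ (b+1)
      = x i * x j * (x i ^ a * x j ^ b + x j ^ a * x i ^ b) := by ring
    _ ≤ x i * x j * (x i ^ (a+b) + x j ^ (a+b)) := h2
    _ = x i ^ (a+b+1) * x j + x j ^ (a+b+1) * x i := by ring

lemma list_prod_le {d : ℕ} (x : Fin d → ℝ) (hx : ∀ i, 0 ≤ x i) (hsum : ∑ i, x i = 1) :
    ∀ L : List ℕ, L ≠ [] → (∀ m ∈ L, 0 < m) →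
      (L.map fun m => ∑ i, x i ^ m).prod ≤ ∑ i, x i ^ (L.sum + 1 - L.length) := by
  intro L
  induction L with
  | nil => intro h; exact absurd rfl h
  | cons a t ih =>
    intro _ hpos
    rcases eq_or_ne t [] with rfl | ht
    · simp
    · have hpos' : ∀ m ∈ t, 0 < m := fun m hm => hpos m (List.mem_cons_of_mem a hm)
      have hlen : t.length ≤ t.sum := by
        calc t.length = (t.map fun _ => 1).sum := by simp
          _ ≤ (t.map id).sum := List.sum_le_sum fun m hm => hpos' m hm
          _ = t.sum := by rw [List.map_id]
      have ha : 0 < a := hpos a List.mem_cons_self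
      have hprodnn : 0 ≤ (t.map fun m => ∑ i, x i ^ m).prod := by
        apply List.prod_nonneg
        intro y hy
        simp only [List.mem_map] at hy
        obtain ⟨m, _, rfl⟩ := hy
        exact Finset.sum_nonneg fun i _ => pow_nonneg (hx i) m
      have hanonneg : 0 ≤ ∑ i, x i ^ a := Finset.sum_nonneg fun i _ => pow_nonneg (hx i) a
      calc ((a :: t).map fun m => ∑ i, x i ^ m).prod
          = (∑ i, x i ^ a) * (t.map fun m => ∑ i, x i ^ m).prod := by simp
        _ ≤ (∑ i, x i ^ a) * ∑ i, x i ^ (t.sum + 1 - t.length) :=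
            mul_le_mul_of_nonneg_left (ih ht hpos') hanonneg
        _ ≤ ∑ i, x i ^ (a + (t.sum + 1 - t.length) - 1) :=
            cheb x hx hsum a _ ha (by omega)
        _ = ∑ i, x i ^ ((a :: t).sum + 1 - (a :: t).length) := by
            have he : a + (t.sum + 1 - t.length) - 1 = (a :: t).sum + 1 - (a :: t).length := by
              simp only [List.sum_cons, List.length_cons]; omega
            rw [he]

/-- For a density operator `ρ` on a finite-dimensional Hilbert space, integers
`n ≥ k ≥ 2`, and any list `n₁, …, n_{n+1-k}` of positive integers of length `n + 1 - k`
summing to `n`, one has `Tr(ρ^k) ≥ ∏ᵢ Tr(ρ^{nᵢ})`. -/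
theorem trace_pow_k_ge_prod_trace_pow {d : ℕ} (ρ : Matrix (Fin d) (Fin d) ℂ)
    (hρ : ρ.PosSemidef) (htr : ρ.trace = 1)
    (n k : ℕ) (hk : 2 ≤ k) (hkn : k ≤ n)
    (L : List ℕ) (hpos : ∀ i ∈ L, 0 < i) (hsum : L.sum = n) (hlen : L.length = n + 1 - k) :
    (L.map fun i => ((ρ ^ i).trace).re).prod ≤ ((ρ ^ k).trace).re := by
  set x : Fin d → ℝ := hρ.1.eigenvalues with hx
  have hxnn : ∀ i, 0 ≤ x i := hρ.eigenvalues_nonneg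
  have htrre : ∀ m : ℕ, ((ρ ^ m).trace).re = ∑ i, x i ^ m := by
    intro m
    rw [trace_pow_eq ρ hρ m, Complex.re_sum]
    simp [← Complex.ofReal_pow]
    rfl
  have hsum1 : ∑ i, x i = 1 := by
    have h1 := htrre 1
    rw [pow_one, htr] at h1
    simp only [pow_one] at h1
    simpa using h1.symm
  have hne : L ≠ [] := by
    intro h
    rw [h] at hlen
    have h0 : (0:ℕ) = n + 1 - k := hlen
    omega
  have hmap : (L.map fun i => ((ρ ^ i).trace).re) = L.map fun m => ∑ i, x i ^ m := by
    apply List.map_congr_left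
    intro m _
    exact htrre m
  rw [hmap, htrre k]
  have hmain := list_prod_le x hxnn hsum1 L hne hpos
  have hexp : L.sum + 1 - L.length = k := by
    rw [hsum, hlen]; omega
  rwa [hexp] at hmain
end

section
/- Let ρ_{AB} be a pure state on a finite-dimensional bipartite Hilbert space H_A ⊗ H_B, n a positive integer, π a non-crossing permutation in S_n with Kreweras complement π̄, τ the full cycle (1...n). Then Tr(ρ_{AB}^{⊗n} · (U_τ on A^n) ⊗ (U_π on B^n)) = ∏_{X̄ ∈ π̄} Tr(ρ_A^{|X̄|}), where U_σ denotes the unitary permuting the n tensor factors according to σ and ρ_A = Tr_B ρ_{AB}. -/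
open Matrix ComplexOrder

/-- The `n`-fold tensor power `ρ^{⊗n}` of a matrix, as a matrix on `H^{⊗n}`
(indexed by functions `Fin n → ι`). -/
noncomputable def tensorPow {ι : Type} [Fintype ι] (ρ : Matrix ι ι ℂ) (n : ℕ) :
    Matrix (Fin n → ι) (Fin n → ι) ℂ :=
  Matrix.of fun f g => ∏ i, ρ (f i) (g i)

/-- The unitary `U_σ` permuting the `n` tensor factors of `H^{⊗n}` according to `σ`:
`U_σ (v₁ ⊗ ⋯ ⊗ v_n) = v_{σ⁻¹(1)} ⊗ ⋯ ⊗ v_{σ⁻¹(n)}`. -/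
noncomputable def permMatrix (d n : ℕ) (σ : Equiv.Perm (Fin n)) :
    Matrix (Fin n → Fin d) (Fin n → Fin d) ℂ :=
  Matrix.of fun f g => if ∀ i, f i = g (σ⁻¹ i) then 1 else 0

/-- The unitary `U_{σA|A^n} ⊗ U_{σB|B^n}` on `(H_A ⊗ H_B)^{⊗n}` which permutes the `A`
tensor factors by `σA` and the `B` tensor factors by `σB`. -/
noncomputable def permPairMatrix (dA dB n : ℕ) (σA σB : Equiv.Perm (Fin n)) :
    Matrix (Fin n → Fin dA × Fin dB) (Fin n → Fin dA × Fin dB) ℂ :=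
  Matrix.of fun f g =>
    if ∀ i, f i = ((g (σA⁻¹ i)).1, (g (σB⁻¹ i)).2) then 1 else 0

/-- The reduced state `ρ_A = Tr_B ρ_{AB}` (partial trace over the second factor). -/
noncomputable def ptraceB {dA dB : ℕ}
    (ρ : Matrix (Fin dA × Fin dB) (Fin dA × Fin dB) ℂ) : Matrix (Fin dA) (Fin dA) ℂ :=
  Matrix.of fun a a' => ∑ b, ρ (a, b) (a', b)
/-- The cycle type of a permutation including fixed points as 1-cycles. -/
def fullCycleType {n : ℕ} (σ : Equiv.Perm (Fin n)) : Multiset ℕ :=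
  σ.cycleType + Multiset.replicate (Finset.univ.filter fun x => σ x = x).card 1

namespace KrewerasAux

variable {d : ℕ}

/-- The trace functional `Tr(M^{⊗ι} U_σ)` written as a sum over functions. -/
noncomputable def F (M : Matrix (Fin d) (Fin d) ℂ) {ι : Type*} [Fintype ι] [DecidableEq ι]
    (σ : Equiv.Perm ι) : ℂ :=
  ∑ f : ι → Fin d, ∏ i, M (f i) (f (σ⁻¹ i))

lemma F_eq (M : Matrix (Fin d) (Fin d) ℂ) {ι : Type*} [Fintype ι] [DecidableEq ι]
    (σ : Equiv.Perm ι) :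
    F M σ = ∑ f : ι → Fin d, ∏ i, M (f (σ i)) (f i) := by
  unfold F
  refine Finset.sum_congr rfl fun f _ => ?_
  calc ∏ i, M (f i) (f (σ⁻¹ i))
      = ∏ i, (fun j => M (f (σ j)) (f j)) (σ⁻¹ i) := by
        refine Finset.prod_congr rfl fun i _ => ?_
        simp
    _ = ∏ i, M (f (σ i)) (f i) := Equiv.prod_comp σ⁻¹ (fun j => M (f (σ j)) (f j))

lemma sum_prod {ι : Type*} [Fintype ι] [DecidableEq ι] (g : ι → Fin d → ℂ) :
    ∑ f : ι → Fin d, ∏ i, g i (f i) = ∏ i, ∑ c, g i c :=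
  (Fintype.prod_sum g).symm

lemma F_one {ι : Type*} [Fintype ι] [DecidableEq ι] (M : Matrix (Fin d) (Fin d) ℂ) :
    F M (1 : Equiv.Perm ι) = M.trace ^ Fintype.card ι := by
  rw [F_eq]
  simp only [Equiv.Perm.one_apply]
  rw [sum_prod (fun i c => M c c)]
  simp [Matrix.trace, Matrix.diag, Finset.prod_const, Finset.card_univ]

lemma F_permCongr (M : Matrix (Fin d) (Fin d) ℂ) {ι κ : Type*} [Fintype ι] [DecidableEq ι]
    [Fintype κ] [DecidableEq κ] (e : ι ≃ κ) (σ : Equiv.Perm ι) :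
    F M (e.permCongr σ) = F M σ := by
  rw [F_eq, F_eq]
  rw [← Equiv.sum_comp (Equiv.arrowCongr e (Equiv.refl (Fin d))).symm
    (fun f : ι → Fin d => ∏ i, M (f (σ i)) (f i))]
  refine Finset.sum_congr rfl fun f _ => ?_
  rw [← Equiv.prod_comp e (fun k => M (f ((e.permCongr σ) k)) (f k))]
  refine Finset.prod_congr rfl fun i _ => ?_
  simp [Equiv.permCongr_apply, Equiv.arrowCongr]

lemma F_sumCongr (M : Matrix (Fin d) (Fin d) ℂ) {ι κ : Type*} [Fintype ι] [DecidableEq ι]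
    [Fintype κ] [DecidableEq κ] (σ₁ : Equiv.Perm ι) (σ₂ : Equiv.Perm κ) :
    F M (Equiv.sumCongr σ₁ σ₂) = F M σ₁ * F M σ₂ := by
  rw [F_eq, F_eq, F_eq]
  rw [← Equiv.sum_comp (Equiv.sumArrowEquivProdArrow ι κ (Fin d)).symm
    (fun f : ι ⊕ κ → Fin d => ∏ i, M (f ((Equiv.sumCongr σ₁ σ₂) i)) (f i))]
  rw [Fintype.sum_prod_type, Finset.sum_mul_sum]
  refine Finset.sum_congr rfl fun a _ => Finset.sum_congr rfl fun b _ => ?_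
  rw [Fintype.prod_sum_type]
  simp [Equiv.sumArrowEquivProdArrow, Sum.elim]

lemma F_subtype_split (M : Matrix (Fin d) (Fin d) ℂ) {ι : Type*} [Fintype ι] [DecidableEq ι]
    (σ : Equiv.Perm ι) (p : ι → Prop) [DecidablePred p] (h : ∀ x, p x ↔ p (σ x)) :
    F M σ = F M (σ.subtypePerm (fun x => (h x).symm)) *
      F M (σ.subtypePerm (fun x => (not_congr (h x)).symm) : Equiv.Perm {x // ¬ p x}) := by
  rw [← F_sumCongr]
  rw [← F_permCongr M (Equiv.sumCompl p)]
  congr 1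
  ext x
  by_cases hx : p x <;>
    simp [Equiv.permCongr_apply, Equiv.sumCompl_symm_apply_of_pos,
      Equiv.sumCompl_symm_apply_of_neg, hx, Equiv.Perm.subtypePerm_apply]

lemma chain (M : Matrix (Fin d) (Fin d) ℂ) :
    ∀ (m : ℕ) (b : Fin d) (v : Fin d → ℂ),
      ∑ f : Fin m → Fin d,
          (∏ i : Fin m, M ((Fin.cons b f : Fin (m + 1) → Fin d) i.succ)
            ((Fin.cons b f : Fin (m + 1) → Fin d) i.castSucc)) *
          v ((Fin.cons b f : Fin (m + 1) → Fin d) (Fin.last m)) =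
        ∑ c, (M ^ m) c b * v c := by
  intro m
  induction m with
  | zero =>
    intro b v
    simp [Matrix.one_apply]
  | succ m ih =>
    intro b v
    rw [← Equiv.sum_comp (Fin.consEquiv (fun _ : Fin (m + 1) => Fin d))
      (fun f : Fin (m + 1) → Fin d =>
        (∏ i : Fin (m + 1), M ((Fin.cons b f : Fin (m + 2) → Fin d) i.succ)
            ((Fin.cons b f : Fin (m + 2) → Fin d) i.castSucc)) *
          v ((Fin.cons b f : Fin (m + 2) → Fin d) (Fin.last (m + 1))))]
    rw [Fintype.sum_prod_type]
    have key : ∀ (c : Fin d) (g : Fin m → Fin d),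
        (∏ i : Fin (m + 1),
            M ((Fin.cons b (Fin.cons c g) : Fin (m + 2) → Fin d) i.succ)
              ((Fin.cons b (Fin.cons c g) : Fin (m + 2) → Fin d) i.castSucc)) *
          v ((Fin.cons b (Fin.cons c g) : Fin (m + 2) → Fin d) (Fin.last (m + 1))) =
        M c b * ((∏ i : Fin m, M ((Fin.cons c g : Fin (m + 1) → Fin d) i.succ)
            ((Fin.cons c g : Fin (m + 1) → Fin d) i.castSucc)) *
          v ((Fin.cons c g : Fin (m + 1) → Fin d) (Fin.last m))) := by
      intro c g
      have hv : (Fin.cons b (Fin.cons c g) : Fin (m + 2) → Fin d) (Fin.last (m + 1)) =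
          (Fin.cons c g : Fin (m + 1) → Fin d) (Fin.last m) := by
        rw [← Fin.succ_last, Fin.cons_succ]
      rw [Fin.prod_univ_succ, mul_assoc, hv]
      simp [← Fin.succ_castSucc]
    calc ∑ c, ∑ g : Fin m → Fin d,
          (∏ i : Fin (m + 1),
              M ((Fin.cons b ((Fin.consEquiv _) (c, g)) : Fin (m + 2) → Fin d) i.succ)
                ((Fin.cons b ((Fin.consEquiv _) (c, g)) : Fin (m + 2) → Fin d) i.castSucc)) *
            v ((Fin.cons b ((Fin.consEquiv _) (c, g)) : Fin (m + 2) → Fin d) (Fin.last (m + 1)))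
        = ∑ c, M c b * ∑ g : Fin m → Fin d,
            (∏ i : Fin m, M ((Fin.cons c g : Fin (m + 1) → Fin d) i.succ)
              ((Fin.cons c g : Fin (m + 1) → Fin d) i.castSucc)) *
            v ((Fin.cons c g : Fin (m + 1) → Fin d) (Fin.last m)) := by
          refine Finset.sum_congr rfl fun c _ => ?_
          rw [Finset.mul_sum]
          exact Finset.sum_congr rfl fun g _ => key c g
      _ = ∑ c, M c b * ∑ c', (M ^ m) c' c * v c' := by
          refine Finset.sum_congr rfl fun c _ => ?_
          rw [ih c v]
      _ = ∑ c', (M ^ (m + 1)) c' b * v c' := by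
          simp_rw [Finset.mul_sum]
          rw [Finset.sum_comm]
          refine Finset.sum_congr rfl fun c' _ => ?_
          rw [pow_succ, Matrix.mul_apply, Finset.sum_mul]
          refine Finset.sum_congr rfl fun c _ => ?_
          ring

lemma F_finRotate (M : Matrix (Fin d) (Fin d) ℂ) (m : ℕ) :
    F M (finRotate (m + 1)) = (M ^ (m + 1)).trace := by
  rw [F_eq]
  have key : ∀ f : Fin (m + 1) → Fin d,
      ∏ i, M (f (finRotate (m + 1) i)) (f i) =
        ((∏ i : Fin m, M (f i.succ) (f i.castSucc)) * M (f 0) (f (Fin.last m))) := by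
    intro f
    rw [Fin.prod_univ_castSucc, finRotate_succ_apply, Fin.last_add_one]
    refine congr_arg₂ _ (Finset.prod_congr rfl fun i _ => ?_) rfl
    rw [finRotate_succ_apply, Fin.coeSucc_eq_succ]
  calc ∑ f : Fin (m + 1) → Fin d, ∏ i, M (f (finRotate (m + 1) i)) (f i)
      = ∑ f : Fin (m + 1) → Fin d,
          (∏ i : Fin m, M (f i.succ) (f i.castSucc)) * M (f 0) (f (Fin.last m)) := by
        exact Finset.sum_congr rfl fun f _ => key f
    _ = ∑ b, ∑ g : Fin m → Fin d,
          (∏ i : Fin m, M ((Fin.cons b g : Fin (m + 1) → Fin d) i.succ)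
            ((Fin.cons b g : Fin (m + 1) → Fin d) i.castSucc)) *
          M b ((Fin.cons b g : Fin (m + 1) → Fin d) (Fin.last m)) := by
        rw [← Equiv.sum_comp (Fin.consEquiv (fun _ : Fin (m + 1) => Fin d))
          (fun f : Fin (m + 1) → Fin d =>
            (∏ i : Fin m, M (f i.succ) (f i.castSucc)) * M (f 0) (f (Fin.last m)))]
        rw [Fintype.sum_prod_type]
        refine Finset.sum_congr rfl fun b _ => Finset.sum_congr rfl fun g _ => ?_
        simp
    _ = ∑ b, ∑ c, (M ^ m) c b * M b c := by
        exact Finset.sum_congr rfl fun b _ => chain M m b (fun c => M b c)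
    _ = (M ^ (m + 1)).trace := by
        rw [Matrix.trace, Finset.sum_comm]
        refine Finset.sum_congr rfl fun c _ => ?_
        rw [Matrix.diag_apply, pow_succ, Matrix.mul_apply]

lemma F_subtypePerm_support_isCycle (M : Matrix (Fin d) (Fin d) ℂ) {α : Type*} [Fintype α]
    [DecidableEq α] (σ : Equiv.Perm α) (hσ : σ.IsCycle)
    (h : ∀ x, x ∈ σ.support ↔ σ x ∈ σ.support) :
    F M (σ.subtypePerm (fun x => (h x).symm) : Equiv.Perm {x // x ∈ σ.support}) = (M ^ σ.support.card).trace := by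
  obtain ⟨x, hx, -⟩ := id hσ
  obtain ⟨m', hm'⟩ : ∃ m', σ.support.card = m' + 1 :=
    ⟨σ.support.card - 1, by have := hσ.two_le_card_support; omega⟩
  have hcy : σ.IsCycleOn ↑σ.support := by
    rw [Equiv.Perm.coe_support_eq_set_support]
    exact hσ.isCycleOn
  have hxs : x ∈ σ.support := Equiv.Perm.mem_support.2 hx
  have hmem : ∀ j : ℕ, (σ ^ j) x ∈ σ.support := fun j => by
    rw [Equiv.Perm.pow_apply_mem_support]
    exact hxs
  have hpow : ∀ j k : ℕ, ((σ ^ j) x = (σ ^ k) x ↔ j ≡ k [MOD m' + 1]) := fun j k => by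
    rw [← hm']
    simpa using hcy.pow_apply_eq_pow_apply (a := x) (by simpa using hxs) (m := j) (n := k)
  have hbij : Function.Bijective (fun j : Fin (m' + 1) => (⟨(σ ^ (j : ℕ)) x, hmem j⟩ :
      {y // y ∈ σ.support})) := by
    rw [Fintype.bijective_iff_injective_and_card]
    constructor
    · intro j k hjk
      have h2 : (σ ^ (j : ℕ)) x = (σ ^ (k : ℕ)) x := congr_arg Subtype.val hjk
      rw [hpow] at h2
      exact Fin.ext (Nat.ModEq.eq_of_lt_of_lt h2 j.2 k.2)
    · rw [Fintype.card_fin, Fintype.card_coe, hm']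
  set E := Equiv.ofBijective _ hbij with hE
  have hconj : E.permCongr (finRotate (m' + 1)) = σ.subtypePerm (fun x => (h x).symm) := by
    apply Equiv.ext
    intro z
    obtain ⟨j, rfl⟩ := E.surjective z
    rw [Equiv.permCongr_apply, Equiv.symm_apply_apply]
    apply Subtype.ext
    rw [Equiv.Perm.subtypePerm_apply]
    show (σ ^ (((finRotate (m' + 1)) j : Fin (m' + 1)) : ℕ)) x = σ ((σ ^ (j : ℕ)) x)
    have h1 : σ ((σ ^ (j : ℕ)) x) = (σ ^ ((j : ℕ) + 1)) x := by
      rw [pow_succ', Equiv.Perm.mul_apply]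
    have hm1 : 1 % (m' + 1) = 1 := Nat.mod_eq_of_lt (by
      have := hσ.two_le_card_support
      omega)
    rw [h1, hpow, finRotate_succ_apply, Fin.val_add, Fin.val_one', hm1]
    exact Nat.mod_modEq _ _
  rw [← hconj, F_permCongr, F_finRotate, hm']

theorem F_eq_cycleType_prod (M : Matrix (Fin d) (Fin d) ℂ) (htr : M.trace = 1)
    {α : Type*} [Fintype α] [DecidableEq α] (σ : Equiv.Perm α) :
    F M σ = (σ.cycleType.map fun m => (M ^ m).trace).prod := by
  induction σ using Equiv.Perm.cycle_induction_on with
  | base_one => simp [F_one, htr]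
  | base_cycles σ hσ =>
    have h : ∀ x, x ∈ σ.support ↔ σ x ∈ σ.support :=
      fun x => (Equiv.Perm.apply_mem_support).symm
    rw [F_subtype_split M σ (fun x => x ∈ σ.support) h]
    have h2 : (σ.subtypePerm (fun x => (not_congr (h x)).symm) :
        Equiv.Perm {x // ¬ x ∈ σ.support}) = 1 := by
      apply Equiv.ext
      rintro ⟨y, hy⟩
      apply Subtype.ext
      rw [Equiv.Perm.subtypePerm_apply]
      simpa using Equiv.Perm.notMem_support.1 hy
    rw [h2, F_one, htr, one_pow, mul_one, hσ.cycleType]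
    have h3 := F_subtypePerm_support_isCycle M σ hσ h
    rw [Subsingleton.elim (Finset.Subtype.fintype σ.support)
      (Subtype.fintype fun x => x ∈ σ.support)] at h3
    simpa using h3
  | induction_disjoint σ τ hd hc ih1 ih2 =>
    have hτfix : ∀ x, x ∈ σ.support → τ x = x := by
      intro x hx
      rcases hd x with h' | h'
      · exact absurd h' (Equiv.Perm.mem_support.1 hx)
      · exact h'
    have hσfix2 : ∀ x, x ∉ σ.support → σ (τ x) = τ x := by
      intro x hx
      rcases hd (τ x) with h' | h'
      · exact h'
      · have : τ x = x := τ.injective h'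
        rw [this]
        exact Equiv.Perm.notMem_support.1 hx
    have hτinv : ∀ x, x ∈ σ.support ↔ τ x ∈ σ.support := by
      intro x
      constructor
      · intro hx
        rwa [hτfix x hx]
      · intro hx
        by_contra hxc
        exact absurd (hσfix2 x hxc) (Equiv.Perm.mem_support.1 hx)
    have hinv : ∀ x, x ∈ σ.support ↔ (σ * τ) x ∈ σ.support := by
      intro x
      rw [hτinv x, Equiv.Perm.mul_apply]
      exact Equiv.Perm.apply_mem_support.symm
    have e1 : ((σ * τ).subtypePerm (fun x => (hinv x).symm) : Equiv.Perm {x // x ∈ σ.support}) =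
        σ.subtypePerm (p := fun x => x ∈ σ.support)
          (fun x => (Equiv.Perm.apply_mem_support)) := by
      apply Equiv.ext
      rintro ⟨y, hy⟩
      apply Subtype.ext
      simp only [Equiv.Perm.subtypePerm_apply, Equiv.Perm.mul_apply]
      rw [hτfix y hy]
    have e2 : ((σ * τ).subtypePerm (fun x => (not_congr (hinv x)).symm) :
        Equiv.Perm {x // ¬ x ∈ σ.support}) =
        τ.subtypePerm (p := fun x => ¬ x ∈ σ.support) (fun x => (not_congr (hτinv x)).symm) := by
      apply Equiv.ext
      rintro ⟨y, hy⟩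
      apply Subtype.ext
      simp only [Equiv.Perm.subtypePerm_apply, Equiv.Perm.mul_apply]
      exact hσfix2 y hy
    have e3 : (σ.subtypePerm (p := fun x => ¬ x ∈ σ.support)
        (fun x => not_congr (Equiv.Perm.apply_mem_support)) :
        Equiv.Perm {x // ¬ x ∈ σ.support}) = 1 := by
      apply Equiv.ext
      rintro ⟨y, hy⟩
      apply Subtype.ext
      rw [Equiv.Perm.subtypePerm_apply]
      simpa using Equiv.Perm.notMem_support.1 hy
    have e4 : (τ.subtypePerm (fun x => (hτinv x).symm) : Equiv.Perm {x // x ∈ σ.support}) = 1 := by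
      apply Equiv.ext
      rintro ⟨y, hy⟩
      apply Subtype.ext
      rw [Equiv.Perm.subtypePerm_apply]
      simpa using hτfix y hy
    have key : F M (σ * τ) = F M σ * F M τ := by
      rw [F_subtype_split M (σ * τ) (fun x => x ∈ σ.support) hinv,
        F_subtype_split M σ (fun x => x ∈ σ.support)
          (fun x => (Equiv.Perm.apply_mem_support).symm),
        F_subtype_split M τ (fun x => x ∈ σ.support) hτinv,
        e1, e2, e3, e4]
      simp only [F_one, htr, one_pow, mul_one, one_mul]
    rw [key, ih1, ih2, Equiv.Perm.Disjoint.cycleType_mul hd, Multiset.map_add, Multiset.prod_add]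


lemma trace_eq_F {dA dB n : ℕ} (ρ : Matrix (Fin dA × Fin dB) (Fin dA × Fin dB) ℂ)
    (v : Fin dA × Fin dB → ℂ) (hv : ρ = Matrix.vecMulVec v (star v))
    (σA σB : Equiv.Perm (Fin n)) :
    (tensorPow ρ n * permPairMatrix dA dB n σA σB).trace =
      F (ptraceB ρ) (σB⁻¹ * σA) := by
  have hM : ∀ x y, ptraceB ρ x y = ∑ c, v (x, c) * star (v (y, c)) := by
    intro x y
    simp [ptraceB, hv, Matrix.vecMulVec_apply]
  have step1 : (tensorPow ρ n * permPairMatrix dA dB n σA σB).trace =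
      ∑ f : Fin n → Fin dA × Fin dB,
        ∏ i, ρ (f i) ((f (σA⁻¹ i)).1, (f (σB⁻¹ i)).2) := by
    rw [Matrix.trace]
    simp only [Matrix.diag_apply, Matrix.mul_apply, tensorPow, permPairMatrix,
      Matrix.of_apply]
    refine Finset.sum_congr rfl fun f _ => ?_
    rw [Finset.sum_eq_single (fun i => ((f (σA⁻¹ i)).1, (f (σB⁻¹ i)).2))]
    · simp
    · intro g _ hg
      rw [if_neg, mul_zero]
      intro hc
      exact hg (funext hc)
    · simp
  rw [step1]
  rw [← Equiv.sum_comp (Equiv.arrowProdEquivProdArrow (Fin n) (fun _ => Fin dA) (fun _ => Fin dB)).symm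
    (fun f : Fin n → Fin dA × Fin dB =>
      ∏ i, ρ (f i) ((f (σA⁻¹ i)).1, (f (σB⁻¹ i)).2))]
  rw [Fintype.sum_prod_type]
  unfold F
  refine Finset.sum_congr rfl fun a _ => ?_
  have hterm : ∀ b : Fin n → Fin dB,
      (∏ i, ρ (((Equiv.arrowProdEquivProdArrow (Fin n) (fun _ => Fin dA) (fun _ => Fin dB)).symm (a, b)) i)
        ((((Equiv.arrowProdEquivProdArrow (Fin n) (fun _ => Fin dA) (fun _ => Fin dB)).symm (a, b)) (σA⁻¹ i)).1,
         (((Equiv.arrowProdEquivProdArrow (Fin n) (fun _ => Fin dA) (fun _ => Fin dB)).symm (a, b)) (σB⁻¹ i)).2)) =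
      ∏ i, (v (a i, b i) * star (v (a (σA⁻¹ (σB i)), b i))) := by
    intro b
    have h1 : (∏ i, ρ (((Equiv.arrowProdEquivProdArrow (Fin n) (fun _ => Fin dA) (fun _ => Fin dB)).symm (a, b)) i)
        ((((Equiv.arrowProdEquivProdArrow (Fin n) (fun _ => Fin dA) (fun _ => Fin dB)).symm (a, b)) (σA⁻¹ i)).1,
         (((Equiv.arrowProdEquivProdArrow (Fin n) (fun _ => Fin dA) (fun _ => Fin dB)).symm (a, b)) (σB⁻¹ i)).2)) =
        ∏ i, (v (a i, b i) * star (v (a (σA⁻¹ i), b (σB⁻¹ i)))) := by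
      refine Finset.prod_congr rfl fun i _ => ?_
      simp [Equiv.arrowProdEquivProdArrow, hv, Matrix.vecMulVec_apply]
    rw [h1, Finset.prod_mul_distrib, Finset.prod_mul_distrib]
    congr 1
    rw [← Equiv.prod_comp σB (fun j => star (v (a (σA⁻¹ j), b (σB⁻¹ j))))]
    refine Finset.prod_congr rfl fun i _ => ?_
    simp
  calc ∑ b : Fin n → Fin dB,
        (∏ i, ρ (((Equiv.arrowProdEquivProdArrow (Fin n) (fun _ => Fin dA) (fun _ => Fin dB)).symm (a, b)) i)
        ((((Equiv.arrowProdEquivProdArrow (Fin n) (fun _ => Fin dA) (fun _ => Fin dB)).symm (a, b)) (σA⁻¹ i)).1,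
         (((Equiv.arrowProdEquivProdArrow (Fin n) (fun _ => Fin dA) (fun _ => Fin dB)).symm (a, b)) (σB⁻¹ i)).2))
      = ∑ b : Fin n → Fin dB, ∏ i, (v (a i, b i) * star (v (a (σA⁻¹ (σB i)), b i))) :=
        Finset.sum_congr rfl fun b _ => hterm b
    _ = ∏ i, ∑ c, (v (a i, c) * star (v (a (σA⁻¹ (σB i)), c))) :=
        sum_prod (fun i c => v (a i, c) * star (v (a (σA⁻¹ (σB i)), c)))
    _ = ∏ i, ptraceB ρ (a i) (a ((σB⁻¹ * σA)⁻¹ i)) := by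
        refine Finset.prod_congr rfl fun i _ => ?_
        rw [hM]
        have : (σB⁻¹ * σA)⁻¹ i = σA⁻¹ (σB i) := by
          simp [_root_.mul_inv_rev, Equiv.Perm.mul_apply]
        rw [this]

end KrewerasAux

/-- **Lemma (Kreweras).** Let `ρ_{AB}` be a pure state on a finite-dimensional
bipartite Hilbert space, `n ≥ 1`, `π ∈ S_n` non-crossing with Kreweras complement
`π̄ = π⁻¹ ∘ τ` (`τ = (1 2 … n)`). Then
`Tr(ρ_{AB}^{⊗n} · U_{τ|A^n} ⊗ U_{π|B^n}) = ∏_{X̄ ∈ π̄} Tr(ρ_A^{|X̄|})`,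
the product running over the cycles of the Kreweras complement. -/
theorem trace_pure_tensorPow_perm_eq_kreweras_prod {dA dB : ℕ}
    (ρ : Matrix (Fin dA × Fin dB) (Fin dA × Fin dB) ℂ)
    (hρ : ρ.PosSemidef) (htr : ρ.trace = 1)
    (hpure : ∃ v : Fin dA × Fin dB → ℂ, ρ = Matrix.vecMulVec v (star v))
    (n : ℕ) (hn : 1 ≤ n) (π : Equiv.Perm (Fin n)) (hπ : IsNonCrossingPerm π) :
    (tensorPow ρ n * permPairMatrix dA dB n (finRotate n) π).trace =
      ((fullCycleType (π⁻¹ * finRotate n)).map fun m => (ptraceB ρ ^ m).trace).prod := by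
  obtain ⟨v, hv⟩ := hpure
  have htrM : (ptraceB ρ).trace = 1 := by
    rw [← htr]
    simp [Matrix.trace, ptraceB, Fintype.sum_prod_type]
  rw [KrewerasAux.trace_eq_F ρ v hv (finRotate n) π,
    KrewerasAux.F_eq_cycleType_prod (ptraceB ρ) htrM,
    fullCycleType, Multiset.map_add, Multiset.prod_add, Multiset.map_replicate,
    Multiset.prod_replicate, pow_one, htrM, one_pow, mul_one]
end

section
/- For a pure state ρ_{AB} on a finite-dimensional bipartite Hilbert space and any permutation π ∈ S_n, Tr(ρ_{AB}^{⊗n} · U_{τ|A^n} ⊗ U_{π|B^n}) = Tr(ρ_A^{⊗n} · U_{τ∘π⁻¹}), where τ is the full cycle (1...n). -/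
open Matrix ComplexOrder

/- ### Auxiliary lemmas -/

/-- `Tr(M^{⊗n} U_σ)` as an explicit sum. -/
lemma trace_tensorPow_mul_permMatrix (d n : ℕ) (M : Matrix (Fin d) (Fin d) ℂ)
    (σ : Equiv.Perm (Fin n)) :
    (tensorPow M n * permMatrix d n σ).trace
      = ∑ f : Fin n → Fin d, ∏ i, M (f i) (f (σ⁻¹ i)) := by
  classical
  simp only [Matrix.trace, Matrix.diag, Matrix.mul_apply, tensorPow, permMatrix,
    Matrix.of_apply]
  congr 1
  ext f
  have : ∀ g : Fin n → Fin d, (∀ i, g i = f (σ⁻¹ i)) ↔ g = fun i => f (σ⁻¹ i) := by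
    intro g; rw [funext_iff]
  simp only [this, mul_ite, mul_one, mul_zero, Finset.sum_ite_eq', Finset.mem_univ, if_true]

/-- `Tr(M^{⊗n} (U_{σA} ⊗ U_{σB}))` as an explicit sum. -/
lemma trace_tensorPow_mul_permPairMatrix (dA dB n : ℕ)
    (M : Matrix (Fin dA × Fin dB) (Fin dA × Fin dB) ℂ) (σA σB : Equiv.Perm (Fin n)) :
    (tensorPow M n * permPairMatrix dA dB n σA σB).trace
      = ∑ f : Fin n → Fin dA × Fin dB, ∏ i, M (f i) ((f (σA⁻¹ i)).1, (f (σB⁻¹ i)).2) := by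
  classical
  simp only [Matrix.trace, Matrix.diag, Matrix.mul_apply, tensorPow, permPairMatrix,
    Matrix.of_apply]
  congr 1
  ext f
  have : ∀ g : Fin n → Fin dA × Fin dB, (∀ i, g i = ((f (σA⁻¹ i)).1, (f (σB⁻¹ i)).2))
      ↔ g = fun i => ((f (σA⁻¹ i)).1, (f (σB⁻¹ i)).2) := by
    intro g; rw [funext_iff]
  simp only [this, mul_ite, mul_one, mul_zero, Finset.sum_ite_eq', Finset.mem_univ, if_true]

/-- The common value both sides reduce to, as a function of a single permutation. -/
noncomputable def pureStateSum (dA dB n : ℕ) (v : Fin dA × Fin dB → ℂ)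
    (σ : Equiv.Perm (Fin n)) : ℂ :=
  ∑ f : Fin n → Fin dA × Fin dB,
    ∏ i, v (f i) * (starRingEnd ℂ) (v ((f i).1, (f (σ i)).2))

/-- `pureStateSum` is invariant under conjugation of the permutation. -/
lemma pureStateSum_conj (dA dB n : ℕ) (v : Fin dA × Fin dB → ℂ)
    (σ h : Equiv.Perm (Fin n)) :
    pureStateSum dA dB n v σ = pureStateSum dA dB n v (h * σ * h⁻¹) := by
  classical
  unfold pureStateSum
  apply Fintype.sum_equiv (Equiv.arrowCongr h (Equiv.refl _))
  intro f
  conv_rhs => rw [← Equiv.prod_comp h]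
  apply Finset.prod_congr rfl
  intro i _
  simp [Equiv.arrowCongr, Equiv.Perm.mul_apply]

/-- `pureStateSum` as a double sum over separate `A` and `B` functions. -/
lemma pureStateSum_pair (dA dB n : ℕ) (v : Fin dA × Fin dB → ℂ) (σ : Equiv.Perm (Fin n)) :
    pureStateSum dA dB n v σ = ∑ a : Fin n → Fin dA, ∑ b : Fin n → Fin dB,
      ∏ i, v (a i, b i) * (starRingEnd ℂ) (v (a i, b (σ i))) := by
  classical
  unfold pureStateSum
  have h : (∑ f : Fin n → Fin dA × Fin dB,
      ∏ i, v (f i) * (starRingEnd ℂ) (v ((f i).1, (f (σ i)).2)))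
      = ∑ p : (Fin n → Fin dA) × (Fin n → Fin dB),
        ∏ i, v (p.1 i, p.2 i) * (starRingEnd ℂ) (v (p.1 i, p.2 (σ i))) := by
    apply Fintype.sum_equiv (Equiv.arrowProdEquivProdArrow _ _ _)
    intro f
    simp [Equiv.arrowProdEquivProdArrow]
  rw [h, Fintype.sum_prod_type]

/-- The left-hand side as a `pureStateSum`. -/
lemma lhs_eq_pureStateSum (dA dB n : ℕ) (v : Fin dA × Fin dB → ℂ)
    (τ π : Equiv.Perm (Fin n)) :
    ∑ f : Fin n → Fin dA × Fin dB,
      ∏ i, v (f i) * (starRingEnd ℂ) (v ((f (τ⁻¹ i)).1, (f (π⁻¹ i)).2))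
      = pureStateSum dA dB n v (π⁻¹ * τ) := by
  classical
  unfold pureStateSum
  apply Finset.sum_congr rfl; intro f _
  rw [Finset.prod_mul_distrib, Finset.prod_mul_distrib]
  congr 1
  rw [← Equiv.prod_comp τ]
  simp [Equiv.Perm.mul_apply]

/-- The right-hand side as a `pureStateSum`. -/
lemma rhs_eq_pureStateSum (dA dB n : ℕ) (v : Fin dA × Fin dB → ℂ)
    (σ : Equiv.Perm (Fin n)) :
    ∑ a : Fin n → Fin dA,
      ∏ i, (∑ c : Fin dB, v (a i, c) * (starRingEnd ℂ) (v (a (σ⁻¹ i), c)))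
      = pureStateSum dA dB n v σ := by
  classical
  rw [pureStateSum_pair]
  apply Finset.sum_congr rfl; intro a _
  rw [Finset.prod_univ_sum, Fintype.piFinset_univ]
  apply Finset.sum_congr rfl; intro b _
  rw [Finset.prod_mul_distrib, Finset.prod_mul_distrib]
  congr 1
  conv_rhs => rw [← Equiv.prod_comp σ⁻¹]
  simp

/-- For a pure (rank-one) state `ρ_{AB}` on a finite-dimensional bipartite Hilbert
space and any `π ∈ S_n`,
`Tr(ρ_{AB}^{⊗n} · U_{τ|A^n} ⊗ U_{π|B^n}) = Tr(ρ_A^{⊗n} · U_{τ∘π⁻¹})`,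
where `τ = (1 2 … n)` is the full cycle and `ρ_A = Tr_B ρ_{AB}`. -/
theorem trace_pure_tensorPow_perm_eq_reduced {dA dB : ℕ}
    (ρ : Matrix (Fin dA × Fin dB) (Fin dA × Fin dB) ℂ)
    (hρ : ρ.PosSemidef) (htr : ρ.trace = 1)
    (hpure : ∃ v : Fin dA × Fin dB → ℂ, ρ = Matrix.vecMulVec v (star v))
    (n : ℕ) (π : Equiv.Perm (Fin n)) :
    (tensorPow ρ n * permPairMatrix dA dB n (finRotate n) π).trace =
      (tensorPow (ptraceB ρ) n * permMatrix dA n (finRotate n * π⁻¹)).trace := by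
  classical
  obtain ⟨v, rfl⟩ := hpure
  set τ : Equiv.Perm (Fin n) := finRotate n with hτ
  rw [trace_tensorPow_mul_permPairMatrix, trace_tensorPow_mul_permMatrix]
  have hL : (∑ f : Fin n → Fin dA × Fin dB,
      ∏ i, (Matrix.vecMulVec v (star v)) (f i) ((f (τ⁻¹ i)).1, (f (π⁻¹ i)).2))
      = pureStateSum dA dB n v (π⁻¹ * τ) := by
    rw [← lhs_eq_pureStateSum]
    apply Finset.sum_congr rfl; intro f _
    apply Finset.prod_congr rfl; intro i _
    simp [Matrix.vecMulVec_apply]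
  have hR : (∑ f : Fin n → Fin dA,
      ∏ i, (ptraceB (Matrix.vecMulVec v (star v))) (f i) (f ((τ * π⁻¹)⁻¹ i)))
      = pureStateSum dA dB n v (τ * π⁻¹) := by
    rw [← rhs_eq_pureStateSum dA dB n v (τ * π⁻¹)]
    apply Finset.sum_congr rfl; intro a _
    apply Finset.prod_congr rfl; intro i _
    simp [ptraceB, Matrix.vecMulVec_apply]
  rw [hL, hR]
  rw [pureStateSum_conj dA dB n v (π⁻¹ * τ) π]
  congr 1
  group
end

section
/- Suppose ρ' is a density operator on a k-fold bipartite product satisfying the min-entropy chain-rule inequality H_min(AB) ≥ c + H_min(B) for some real c, i.e. ‖ρ'_{AB}‖_∞ ≤ 2^{-c}‖ρ'_B‖_∞. Then for every sufficiently large integer n, Tr(ρ'_{AB})^n < 2^{(1-n)c'}·Tr(ρ'_B)^n for every c' < c. -/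
open Matrix ComplexOrder

/-- The marginal `ρ_B = Tr_A ρ_{AB}` (partial trace over the first factor). -/
noncomputable def ptraceA {dA dB : ℕ}
    (ρ : Matrix (Fin dA × Fin dB) (Fin dA × Fin dB) ℂ) : Matrix (Fin dB) (Fin dB) ℂ :=
  Matrix.of fun b b' => ∑ a, ρ (a, b) (a, b')

private lemma myConjPowAux {d : Type*} [Fintype d] [DecidableEq d] (U D : Matrix d d ℂ)
    (hU : U * star U = 1) (hU' : star U * U = 1) (n : ℕ) :
    (U * D * star U) ^ n = U * D ^ n * star U := by
  induction n with
  | zero => simp [hU]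
  | succ n ih =>
      rw [pow_succ, ih, pow_succ]
      calc U * D ^ n * star U * (U * D * star U)
          = U * D ^ n * (star U * U) * (D * star U) := by noncomm_ring
        _ = U * (D ^ n * D) * star U := by rw [hU']; noncomm_ring

private lemma trace_pow_re {d : Type*} [Fintype d] [DecidableEq d] {A : Matrix d d ℂ}
    (hA : A.IsHermitian)
    (n : ℕ) : ((A ^ n).trace).re = ∑ i, (hA.eigenvalues i) ^ n := by
  have hU : (hA.eigenvectorUnitary : Matrix d d ℂ) *
      star (hA.eigenvectorUnitary : Matrix d d ℂ) = 1 :=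
    (Matrix.mem_unitaryGroup_iff).mp (hA.eigenvectorUnitary).2
  have hU' : star (hA.eigenvectorUnitary : Matrix d d ℂ) *
      (hA.eigenvectorUnitary : Matrix d d ℂ) = 1 :=
    (Matrix.mem_unitaryGroup_iff').mp (hA.eigenvectorUnitary).2
  conv_lhs => rw [hA.spectral_theorem, Unitary.conjStarAlgAut_apply, myConjPowAux _ _ hU hU' n]
  rw [Matrix.trace_mul_cycle, hU', Matrix.one_mul,
    Matrix.diagonal_pow, Matrix.trace_diagonal]
  simp [← Complex.ofReal_pow]

/-- Suppose `ρ'_{AB}` is a density operator on a bipartite product satisfying the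
min-entropy chain-rule inequality `H_min(AB) ≥ c + H_min(B)`, i.e.
`‖ρ'_{AB}‖_∞ ≤ 2^{-c}·‖ρ'_B‖_∞` (operator norms expressed as largest eigenvalues).
Then for every `c' < c` and every sufficiently large integer `n`,
`Tr(ρ'_{AB})^n < 2^{(1-n)·c'}·Tr(ρ'_B)^n`. -/
theorem trace_pow_eventually_lt_of_minEntropy_gap {dA dB : ℕ}
    (ρAB : Matrix (Fin dA × Fin dB) (Fin dA × Fin dB) ℂ)
    (hAB : ρAB.PosSemidef) (htr : ρAB.trace = 1)
    (hB : (ptraceA ρAB).PosSemidef) (c : ℝ)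
    (hmin : (⨆ i, hAB.isHermitian.eigenvalues i) ≤
      (2 : ℝ) ^ (-c) * (⨆ j, hB.isHermitian.eigenvalues j)) :
    ∀ c' < c, ∃ N : ℕ, ∀ n ≥ N,
      ((ρAB ^ n).trace).re < (2 : ℝ) ^ ((1 - (n : ℝ)) * c') * (((ptraceA ρAB) ^ n).trace).re := by
  intro c' hc'
  set lam := fun i => hAB.isHermitian.eigenvalues i with hlam
  set μ := fun j => hB.isHermitian.eigenvalues j with hμ
  -- trace of ρB is 1
  have htrB : (ptraceA ρAB).trace = 1 := by
    rw [← htr]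
    simp only [Matrix.trace, Matrix.diag, ptraceA, Matrix.of_apply]
    rw [Fintype.sum_prod_type]
    rw [Finset.sum_comm]
  -- sums of eigenvalues are 1
  have hsumlam : ∑ i, lam i = 1 := by
    have := trace_pow_re hAB.isHermitian 1
    simp only [pow_one] at this
    rw [htr] at this; simpa using this.symm
  have hsumμ : ∑ j, μ j = 1 := by
    have := trace_pow_re hB.isHermitian 1
    simp only [pow_one] at this
    rw [htrB] at this; simpa using this.symm
  have hlamnn : ∀ i, 0 ≤ lam i := fun i => hAB.eigenvalues_nonneg i
  have hμnn : ∀ j, 0 ≤ μ j := fun j => hB.eigenvalues_nonneg j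
  -- nonemptiness
  have hdB : 0 < dB := by
    by_contra h
    push_neg at h
    interval_cases dB
    simp at hsumμ
  have hdAB : Nonempty (Fin dA × Fin dB) := by
    by_contra h
    rw [Finset.univ_eq_empty_iff.mpr (by exact ⟨fun x => absurd ⟨x⟩ h⟩)] at hsumlam
    simp at hsumlam
  haveI : Nonempty (Fin dB) := ⟨⟨0, hdB⟩⟩
  set Λ := ⨆ i, lam i with hΛ
  set M := ⨆ j, μ j with hM
  have hle : ∀ i, lam i ≤ Λ := fun i => le_ciSup (Set.Finite.bddAbove (Set.finite_range _)) i
  have hleμ : ∀ j, μ j ≤ M := fun j => le_ciSup (Set.Finite.bddAbove (Set.finite_range _)) j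
  have hΛnn : 0 ≤ Λ := le_trans (hlamnn hdAB.some) (hle hdAB.some)
  have hMpos : 0 < M := by
    by_contra h
    push_neg at h
    have : ∀ j, μ j = 0 := fun j => le_antisymm (le_trans (hleμ j) h) (hμnn j)
    rw [Finset.sum_congr rfl (fun j _ => this j)] at hsumμ
    simp at hsumμ
  obtain ⟨j0, hj0⟩ := exists_eq_ciSup_of_finite (f := μ)
  -- the eventual bound
  set q := (2 : ℝ) ^ (c' - c) with hq
  have hq0 : 0 < q := Real.rpow_pos_of_pos two_pos _
  have hq1 : q < 1 := Real.rpow_lt_one_of_one_lt_of_neg one_lt_two (by linarith)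
  have htend : Filter.Tendsto (fun n : ℕ => (Fintype.card (Fin dA × Fin dB) : ℝ) * q ^ n)
      Filter.atTop (nhds 0) := by
    simpa using (tendsto_pow_atTop_nhds_zero_of_lt_one hq0.le hq1).const_mul
      ((Fintype.card (Fin dA × Fin dB) : ℝ))
  have hev : ∀ᶠ n : ℕ in Filter.atTop,
      (Fintype.card (Fin dA × Fin dB) : ℝ) * q ^ n < (2 : ℝ) ^ c' :=
    htend.eventually_lt_const (Real.rpow_pos_of_pos two_pos _)
  obtain ⟨N, hN⟩ := Filter.eventually_atTop.mp hev
  refine ⟨N, fun n hn => ?_⟩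
  have hNn := hN n hn
  -- key real powers
  have hkey : (2 : ℝ) ^ (-c) = q * (2 : ℝ) ^ (-c') := by
    rw [hq, ← Real.rpow_add two_pos]; ring_nf
  have hsplit : (2 : ℝ) ^ ((1 - (n : ℝ)) * c') = (2 : ℝ) ^ c' * ((2 : ℝ) ^ (-c')) ^ n := by
    rw [← Real.rpow_natCast ((2:ℝ) ^ (-c')) n, ← Real.rpow_mul (by norm_num),
      ← Real.rpow_add two_pos]
    ring_nf
  have hpos : 0 < ((2 : ℝ) ^ (-c')) ^ n * M ^ n :=
    mul_pos (pow_pos (Real.rpow_pos_of_pos two_pos _) n) (pow_pos hMpos n)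
  calc ((ρAB ^ n).trace).re = ∑ i, (lam i) ^ n := trace_pow_re hAB.isHermitian n
    _ ≤ ∑ _i : Fin dA × Fin dB, Λ ^ n :=
        Finset.sum_le_sum fun i _ => pow_le_pow_left₀ (hlamnn i) (hle i) n
    _ = (Fintype.card (Fin dA × Fin dB) : ℝ) * Λ ^ n := by
        rw [Finset.sum_const]; simp [Finset.card_univ]
    _ ≤ (Fintype.card (Fin dA × Fin dB) : ℝ) * ((2 : ℝ) ^ (-c) * M) ^ n := by
        apply mul_le_mul_of_nonneg_left _ (by positivity)
        exact pow_le_pow_left₀ hΛnn hmin n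
    _ = ((Fintype.card (Fin dA × Fin dB) : ℝ) * q ^ n) * (((2 : ℝ) ^ (-c')) ^ n * M ^ n) := by
        rw [hkey]; ring
    _ < (2 : ℝ) ^ c' * (((2 : ℝ) ^ (-c')) ^ n * M ^ n) :=
        mul_lt_mul_of_pos_right hNn hpos
    _ = (2 : ℝ) ^ ((1 - (n : ℝ)) * c') * M ^ n := by rw [hsplit]; ring
    _ ≤ (2 : ℝ) ^ ((1 - (n : ℝ)) * c') * (((ptraceA ρAB) ^ n).trace).re := by
        apply mul_le_mul_of_nonneg_left _ (Real.rpow_nonneg (by norm_num) _)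
        rw [trace_pow_re hB.isHermitian n]
        have h1 : M = μ j0 := by rw [hM, hj0]
        rw [h1]
        exact Finset.single_le_sum (fun j _ => pow_nonneg (hμnn j) n) (Finset.mem_univ j0)
end
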